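/- arXiv:2411.03809 — 5 statements merged into one kernel-verified Lean document; each statement's English description precedes it below -/
import Mathlib

section
/- Suppose S : ℝ → ℝ satisfies the Tauberian condition 𝔗(X,F,f,α). Let C > 0 and let φ : ℝ → ℝ be Lebesgue integrable with: (1) ∫_{-∞}^{∞} φ(y) dy = 1; (2) ∫_{-∞}^{∞} |y| exp(|y|^α) |φ(y)| dy ≤ C; (3) φ(y) ≥ 0 for y ≥ 0 and φ(y) ≤ 0 for y ≤ 0. Then for every λ ≥ 1 and every x ≥ X such that the functions y ↦ S(x+y)φ(λy) and y ↦ S(x+y)φ(−λy) are Lebesgue integrable, one has λ ∫_{-∞}^{∞} S(x+y) φ(−λy) dy − C f(x)/λ ≤ S(x) ≤ λ ∫_{-∞}^{∞} S(x+y) φ(λy) dy + C f(x)/λ. -/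
open MeasureTheory

/-- The key Tauberian lemma (Lemma 3.1): under the Tauberian condition `𝔗(X,F,f,α)` and for a
test function `φ` with `∫φ = 1`, `∫ |y| exp(|y|^α)|φ(y)| dy ≤ C` and `y·φ(y) ≥ 0`, one has the
two-sided estimate on `S(x)` in terms of convolution averages. -/
theorem stmt_1 (S F f : ℝ → ℝ) (X α : ℝ) (hα0 : 0 ≤ α) (hα1 : α < 1)
    -- Tauberian condition 𝔗(X,F,f,α):
    (hS0 : ∀ x < (0:ℝ), S x = 0)
    (hmono : MonotoneOn (fun x => S x + F x) (Set.Ici X))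
    (hF0 : ∀ x, 0 ≤ F x) (hf0 : ∀ x, 0 ≤ f x)
    (hFneg : ∀ x < (0:ℝ), F x = 0) (hfneg : ∀ x < (0:ℝ), f x = 0)
    (hFf : ∀ x, X ≤ x → ∀ y : ℝ, |F (x + y) - F x| ≤ f x * |y| * Real.exp (|y| ^ α))
    (hX : ∀ y ≤ X, S y + F y ≤ S X + F X)
    -- the test function φ:
    (C : ℝ) (hC : 0 < C) (φ : ℝ → ℝ) (hφint : Integrable φ)
    (hφ1 : (∫ y, φ y) = 1)
    (hφ2int : Integrable (fun y => |y| * Real.exp (|y| ^ α) * |φ y|))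
    (hφ2 : (∫ y, |y| * Real.exp (|y| ^ α) * |φ y|) ≤ C)
    (hφ3 : ∀ y : ℝ, 0 ≤ y → 0 ≤ φ y) (hφ4 : ∀ y : ℝ, y ≤ 0 → φ y ≤ 0) :
    ∀ lam : ℝ, 1 ≤ lam → ∀ x : ℝ, X ≤ x →
      Integrable (fun y => S (x + y) * φ (lam * y)) →
      Integrable (fun y => S (x + y) * φ (-(lam * y))) →
      lam * (∫ y, S (x + y) * φ (-(lam * y))) - C * f x / lam ≤ S x ∧
      S x ≤ lam * (∫ y, S (x + y) * φ (lam * y)) + C * f x / lam := by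
  intro lam hlam x hx hint1 hint2
  have hlam0 : (0:ℝ) < lam := lt_of_lt_of_le one_pos hlam
  have hlamne : lam ≠ 0 := ne_of_gt hlam0
  -- monotonicity of G = S + F up to X
  have hG : ∀ u v : ℝ, u ≤ v → X ≤ v → S u + F u ≤ S v + F v := by
    intro u v huv hXv
    rcases le_total u X with h | h
    · exact le_trans (hX u h) (hmono (le_refl X) hXv hXv)
    · exact hmono h hXv huv
  -- bound on the F-increment
  have hFbd0 : ∀ s t : ℝ, |s| = |t| → |F (x + s / lam) - F x| * |φ t| ≤
      f x / lam * (|t| * Real.exp (|t| ^ α) * |φ t|) := by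
    intro s t hst
    have h1 : |F (x + s / lam) - F x| ≤ f x * |s / lam| * Real.exp (|s / lam| ^ α) :=
      hFf x hx (s / lam)
    have habs : |s / lam| = |t| / lam := by
      rw [abs_div, abs_of_pos hlam0, hst]
    have hexp : Real.exp (|s / lam| ^ α) ≤ Real.exp (|t| ^ α) := by
      apply Real.exp_le_exp.mpr
      rw [habs]
      exact Real.rpow_le_rpow (by positivity) (div_le_self (abs_nonneg t) hlam) hα0
    have h2 : |F (x + s / lam) - F x| ≤ f x * (|t| / lam) * Real.exp (|t| ^ α) := by
      calc |F (x + s / lam) - F x| ≤ f x * |s / lam| * Real.exp (|s / lam| ^ α) := h1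
        _ ≤ f x * |s / lam| * Real.exp (|t| ^ α) := by
            exact mul_le_mul_of_nonneg_left hexp (mul_nonneg (hf0 x) (abs_nonneg _))
        _ = f x * (|t| / lam) * Real.exp (|t| ^ α) := by rw [habs]
    have h3 : |F (x + s / lam) - F x| * |φ t| ≤
        f x * (|t| / lam) * Real.exp (|t| ^ α) * |φ t| :=
      mul_le_mul_of_nonneg_right h2 (abs_nonneg _)
    calc |F (x + s / lam) - F x| * |φ t| ≤
        f x * (|t| / lam) * Real.exp (|t| ^ α) * |φ t| := h3
      _ = f x / lam * (|t| * Real.exp (|t| ^ α) * |φ t|) := by ring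
  have hFbd : ∀ t : ℝ, |F (x + t / lam) - F x| * |φ t| ≤
      f x / lam * (|t| * Real.exp (|t| ^ α) * |φ t|) := fun t => hFbd0 t t rfl
  have hFbd' : ∀ t : ℝ, |F (x + -t / lam) - F x| * |φ t| ≤
      f x / lam * (|t| * Real.exp (|t| ^ α) * |φ t|) := fun t => hFbd0 (-t) t (abs_neg t)
  -- the dominating function is integrable
  have hdomint : Integrable (fun t => f x / lam * (|t| * Real.exp (|t| ^ α) * |φ t|)) :=
    hφ2int.const_mul _
  have hdomval : (∫ t, f x / lam * (|t| * Real.exp (|t| ^ α) * |φ t|)) ≤ C * f x / lam := by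
    rw [integral_const_mul]
    have h := mul_le_mul_of_nonneg_left hφ2 (div_nonneg (hf0 x) hlam0.le)
    calc f x / lam * ∫ t, |t| * Real.exp (|t| ^ α) * |φ t| ≤ f x / lam * C := h
      _ = C * f x / lam := by ring
  constructor
  · -- lower bound
    set g : ℝ → ℝ := fun t => S (x - t / lam) * φ t with hg
    have hfun : (fun y => S (x + y) * φ (-(lam * y))) = fun y => g (-lam * y) := by
      funext y
      show S (x + y) * φ (-(lam * y)) = S (x - -lam * y / lam) * φ (-lam * y)
      rw [neg_mul, neg_div, mul_div_cancel_left₀ y hlamne, sub_neg_eq_add]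
    have hgint : Integrable g := by
      rw [hfun] at hint2
      exact (integrable_comp_mul_left_iff g (by simpa using hlamne : -lam ≠ 0)).mp hint2
    have hchange : (∫ y, S (x + y) * φ (-(lam * y))) = lam⁻¹ * ∫ t, g t := by
      rw [hfun, Measure.integral_comp_mul_left g (-lam)]
      rw [abs_inv, abs_neg, abs_of_pos hlam0, smul_eq_mul]
    -- pointwise bound: g t - S x * φ t ≤ dominating
    have hpt : ∀ t : ℝ, g t - S x * φ t ≤ f x / lam * (|t| * Real.exp (|t| ^ α) * |φ t|) := by
      intro t
      set u := x - t / lam with hu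
      have h1 : ((S u + F u) - (S x + F x)) * φ t ≤ 0 := by
        rcases le_or_gt 0 t with ht | ht
        · have hux : u ≤ x := by
            have : 0 ≤ t / lam := by positivity
            simp only [hu]; linarith
          have := hG u x hux hx
          exact mul_nonpos_of_nonpos_of_nonneg (by linarith) (hφ3 t ht)
        · have hxu : x ≤ u := by
            have : t / lam < 0 := div_neg_of_neg_of_pos ht hlam0
            simp only [hu]; linarith
          have := hG x u hxu (le_trans hx hxu)
          exact mul_nonpos_of_nonneg_of_nonpos (by linarith) (hφ4 t (le_of_lt ht))
      have h2 : (F x - F u) * φ t ≤ f x / lam * (|t| * Real.exp (|t| ^ α) * |φ t|) := by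
        have : (F x - F u) * φ t ≤ |F u - F x| * |φ t| := by
          calc (F x - F u) * φ t ≤ |(F x - F u) * φ t| := le_abs_self _
            _ = |F u - F x| * |φ t| := by rw [abs_mul, abs_sub_comm]
        refine le_trans this ?_
        have : F u = F (x + -t / lam) := by rw [hu]; ring_nf
        rw [this]
        exact hFbd' t
      have : g t - S x * φ t = ((S u + F u) - (S x + F x)) * φ t + (F x - F u) * φ t := by
        simp only [hg, hu]; ring
      linarith
    have hintle : (∫ t, (g t - S x * φ t)) ≤ C * f x / lam := by
      refine le_trans (integral_mono (hgint.sub (hφint.const_mul (S x))) hdomint hpt) hdomval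
    rw [integral_sub hgint (hφint.const_mul (S x)), integral_const_mul, hφ1] at hintle
    rw [hchange]
    have : lam * (lam⁻¹ * ∫ t, g t) = ∫ t, g t := by field_simp
    rw [this]
    linarith
  · -- upper bound
    set g : ℝ → ℝ := fun t => S (x + t / lam) * φ t with hg
    have hfun : (fun y => S (x + y) * φ (lam * y)) = fun y => g (lam * y) := by
      funext y
      show S (x + y) * φ (lam * y) = S (x + lam * y / lam) * φ (lam * y)
      rw [mul_div_cancel_left₀ y hlamne]
    have hgint : Integrable g := by
      rw [hfun] at hint1
      exact (integrable_comp_mul_left_iff g hlamne).mp hint1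
    have hchange : (∫ y, S (x + y) * φ (lam * y)) = lam⁻¹ * ∫ t, g t := by
      rw [hfun, Measure.integral_comp_mul_left g lam]
      rw [abs_inv, abs_of_pos hlam0, smul_eq_mul]
    have hpt : ∀ t : ℝ, S x * φ t - g t ≤ f x / lam * (|t| * Real.exp (|t| ^ α) * |φ t|) := by
      intro t
      set u := x + t / lam with hu
      have h1 : ((S x + F x) - (S u + F u)) * φ t ≤ 0 := by
        rcases le_or_gt 0 t with ht | ht
        · have hxu : x ≤ u := by
            have : 0 ≤ t / lam := by positivity
            simp only [hu]; linarith
          have := hG x u hxu (le_trans hx hxu)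
          exact mul_nonpos_of_nonpos_of_nonneg (by linarith) (hφ3 t ht)
        · have hux : u ≤ x := by
            have : t / lam < 0 := div_neg_of_neg_of_pos ht hlam0
            simp only [hu]; linarith
          have := hG u x hux hx
          exact mul_nonpos_of_nonneg_of_nonpos (by linarith) (hφ4 t (le_of_lt ht))
      have h2 : (F u - F x) * φ t ≤ f x / lam * (|t| * Real.exp (|t| ^ α) * |φ t|) := by
        have : (F u - F x) * φ t ≤ |F u - F x| * |φ t| := by
          calc (F u - F x) * φ t ≤ |(F u - F x) * φ t| := le_abs_self _
            _ = |F u - F x| * |φ t| := by rw [abs_mul]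
        exact le_trans this (hFbd t)
      have : S x * φ t - g t = ((S x + F x) - (S u + F u)) * φ t + (F u - F x) * φ t := by
        simp only [hg, hu]; ring
      linarith
    have hintle : (∫ t, (S x * φ t - g t)) ≤ C * f x / lam := by
      refine le_trans (integral_mono ((hφint.const_mul (S x)).sub hgint) hdomint hpt) hdomval
    rw [integral_sub (hφint.const_mul (S x)) hgint, integral_const_mul, hφ1] at hintle
    rw [hchange]
    have : lam * (lam⁻¹ * ∫ t, g t) = ∫ t, g t := by field_simp
    rw [this]
    linarith
end

section
/- Let m ≥ 1 be an integer and suppose S : ℝ → ℝ satisfies the Tauberian condition 𝔗_m(X,F_m,f_m,α). Let C_m > 0 and let φ : ℝ → ℝ be Lebesgue integrable with: (1) ∫_{-∞}^{∞} φ(y) dy = 1; (2) ∫_{-∞}^{∞} |y|^m exp(|y|^α) |φ(y)| dy ≤ C_m; (3) y^m φ(y) ≥ 0 for all y ∈ ℝ. Then for every λ ≥ 1 and every x ≥ X such that the functions y ↦ S(x+jy)φ(λy) (for integers j with 0 < |j| ≤ m) are Lebesgue integrable, one has |S(x)| ≤ 2^m λ · max_{0<|j|≤m, j ∈ ℤ}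 |∫_{-∞}^{∞} S(x+jy) φ(λy) dy| + C_m f_m(x)/λ^m. -/
open MeasureTheory

/-- The `m`-th finite difference `Δ^m_y(τ;x) = Σ_{j=0}^m (−1)^{m−j} C(m,j) τ(x+jy)`. -/
def finDiff (m : ℕ) (τ : ℝ → ℝ) (y x : ℝ) : ℝ :=
  ∑ j ∈ Finset.range (m + 1), (-1 : ℝ) ^ (m - j) * (m.choose j : ℝ) * τ (x + (j : ℝ) * y)

lemma finDiff_add (m : ℕ) (f g : ℝ → ℝ) (y x : ℝ) :
    finDiff m (fun u => f u + g u) y x = finDiff m f y x + finDiff m g y x := by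
  simp [finDiff, mul_add, Finset.sum_add_distrib]

lemma finDiff_zero_step (m : ℕ) (hm : 1 ≤ m) (τ : ℝ → ℝ) (x : ℝ) :
    finDiff m τ 0 x = 0 := by
  have h := add_pow (1 : ℝ) (-1) m
  simp only [one_pow, one_mul, add_neg_cancel] at h
  have h0 : (0:ℝ) ^ m = 0 := zero_pow (by omega)
  unfold finDiff
  calc (∑ j ∈ Finset.range (m + 1), (-1 : ℝ) ^ (m - j) * (m.choose j : ℝ) * τ (x + (j : ℝ) * 0))
      = (∑ j ∈ Finset.range (m + 1), (-1 : ℝ) ^ (m - j) * (m.choose j : ℝ)) * τ x := by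
        rw [Finset.sum_mul]; apply Finset.sum_congr rfl; intro j _; simp
    _ = 0 := by rw [← h, h0, zero_mul]

lemma finDiff_neg (m : ℕ) (τ : ℝ → ℝ) (y x : ℝ) :
    finDiff m τ (-y) x = (-1 : ℝ) ^ m * finDiff m τ y (x - (m:ℝ) * y) := by
  unfold finDiff
  rw [Finset.mul_sum]
  have := Finset.sum_range_reflect
    (fun j => (-1:ℝ) ^ m * ((-1 : ℝ) ^ (m - j) * (m.choose j : ℝ) * τ (x - m*y + (j : ℝ) * y))) (m+1)
  simp only [Nat.add_sub_cancel] at this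
  rw [← this]
  apply Finset.sum_congr rfl
  intro j hj
  have hj' : j ≤ m := Nat.lt_succ_iff.mp (Finset.mem_range.mp hj)
  rw [Nat.sub_sub_self hj', Nat.choose_symm hj']
  have hcast : ((m - j : ℕ) : ℝ) = (m : ℝ) - j := by
    push_cast [Nat.cast_sub hj']; ring
  have hsgn : (-1:ℝ)^m * (-1:ℝ)^j = (-1:ℝ)^(m-j) := by
    have h1 : (-1:ℝ)^(m-j) * (-1:ℝ)^j = (-1:ℝ)^m := by
      rw [← pow_add, Nat.sub_add_cancel hj']
    have h2 : (-1:ℝ)^j * (-1:ℝ)^j = 1 := by rw [← mul_pow]; norm_num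
    calc (-1:ℝ)^m * (-1:ℝ)^j = (-1:ℝ)^(m-j) * ((-1:ℝ)^j * (-1:ℝ)^j) := by rw [← h1]; ring
      _ = (-1:ℝ)^(m-j) := by rw [h2, mul_one]
  rw [hcast, show x - (m:ℝ)*y + ((m:ℝ)-(j:ℝ))*y = x + (j:ℝ)*(-y) by ring, ← hsgn]
  ring

set_option maxHeartbeats 1000000 in
/-- Lemma 3.3: the Tauberian lemma for the higher-order Tauberian condition `𝔗_m`. -/
theorem stmt_3 (m : ℕ) (hm : 1 ≤ m) (S Fm fm : ℝ → ℝ) (X α : ℝ)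
    (hα0 : 0 ≤ α) (hα1 : α < 1)
    -- F_m and f_m are locally bounded real-valued functions:
    (hFlb : ∀ r : ℝ, 0 < r → ∃ b : ℝ, ∀ x ∈ Set.Icc (-r) r, |Fm x| ≤ b)
    (hflb : ∀ r : ℝ, 0 < r → ∃ b : ℝ, ∀ x ∈ Set.Icc (-r) r, |fm x| ≤ b)
    -- the Tauberian condition 𝔗_m(X,F_m,f_m,α):
    (hS0 : ∀ x < (0:ℝ), S x = 0)
    (h2 : ∀ x, X ≤ x → ∀ y : ℝ, 0 ≤ y ^ m * finDiff m (fun u => S u + Fm u) y x)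
    (h3 : ∀ x, X ≤ x → ∀ y : ℝ, |finDiff m Fm y x| ≤ |y| ^ m * fm x * Real.exp (|y| ^ α))
    (h4 : Even m → ∀ x, X ≤ x → ∀ y : ℝ,
      |finDiff m Fm y (x - y)| ≤ |y| ^ m * fm x * Real.exp (|y| ^ α))
    -- the test function φ:
    (Cm : ℝ) (hCm : 0 < Cm) (φ : ℝ → ℝ) (hφint : Integrable φ)
    (hφ1 : (∫ y, φ y) = 1)
    (hφ2int : Integrable (fun y => |y| ^ m * Real.exp (|y| ^ α) * |φ y|))
    (hφ2 : (∫ y, |y| ^ m * Real.exp (|y| ^ α) * |φ y|) ≤ Cm)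
    (hφ3 : ∀ y : ℝ, 0 ≤ y ^ m * φ y) :
    ∀ lam : ℝ, 1 ≤ lam → ∀ x : ℝ, X ≤ x →
      (∀ j : ℤ, j ≠ 0 → |j| ≤ (m : ℤ) →
        Integrable (fun y => S (x + (j : ℝ) * y) * φ (lam * y))) →
      ∃ j : ℤ, j ≠ 0 ∧ |j| ≤ (m : ℤ) ∧
        |S x| ≤ 2 ^ m * lam * |∫ y, S (x + (j : ℝ) * y) * φ (lam * y)| +
          Cm * fm x / lam ^ m := by
  intro lam hlam x hX hInt
  have hlam0 : (0:ℝ) < lam := lt_of_lt_of_le one_pos hlam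
  have hfm0 : 0 ≤ fm x := by
    have h := (abs_nonneg (finDiff m Fm 1 x)).trans (h3 x hX 1)
    simp only [abs_one, one_pow, Real.one_rpow] at h
    nlinarith [Real.exp_pos (1:ℝ)]
  set T : ℤ → ℝ → ℝ := fun k y => S (x + (k : ℝ) * y) * φ (lam * y) with hT
  clear_value T
  have hphilam : Integrable (fun y => φ (lam * y)) := hφint.comp_mul_left' hlam0.ne'
  have hTint : ∀ k : ℤ, |k| ≤ (m:ℤ) → Integrable (T k) := by
    intro k hk
    by_cases hk0 : k = 0
    · subst hk0
      have he : T 0 = fun y => S x * φ (lam * y) := by funext y; simp [hT]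
      rw [he]
      exact hphilam.const_mul _
    · simp only [hT]; exact hInt k hk0 hk
  have hI0 : (∫ y, T (0:ℤ) y) = S x * lam⁻¹ := by
    have he : T 0 = fun y => S x * φ (lam * y) := by funext y; simp [hT]
    rw [he, integral_const_mul, MeasureTheory.Measure.integral_comp_mul_left φ lam, hφ1,
      abs_of_pos (inv_pos.mpr hlam0)]
    simp
  -- maximum of the integrals
  set Js : Finset ℤ := (Finset.Icc (-(m:ℤ)) (m:ℤ)).erase 0 with hJs
  have hJne : Js.Nonempty := ⟨1, by
    rw [hJs, Finset.mem_erase, Finset.mem_Icc]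
    refine ⟨one_ne_zero, ?_, ?_⟩ <;> omega⟩
  obtain ⟨j₀, hj₀mem, hj₀max⟩ := Finset.exists_max_image Js (fun k => |∫ y, T k y|) hJne
  set M : ℝ := |∫ y, T j₀ y| with hMdef
  clear_value M
  have hM0 : 0 ≤ M := hMdef ▸ abs_nonneg _
  have hMmax : ∀ k : ℤ, k ≠ 0 → |k| ≤ (m:ℤ) → |∫ y, T k y| ≤ M := by
    intro k hk0 hk
    have hk' := abs_le.mp hk
    exact hj₀max k (by rw [hJs, Finset.mem_erase, Finset.mem_Icc]; exact ⟨hk0, hk'⟩)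
  -- the dominating function and its integral
  have hinv1 : lam⁻¹ ≤ 1 := by
    rw [inv_le_one_iff₀]; right; exact hlam
  set g : ℝ → ℝ := fun u => |lam⁻¹ * u| ^ m * Real.exp (|lam⁻¹ * u| ^ α) * |φ u| with hg
  clear_value g
  have hg0 : ∀ u, 0 ≤ g u := by
    intro u; simp only [hg]
    positivity
  have hb0 : ∀ u : ℝ, 0 ≤ |u| ^ m * Real.exp (|u| ^ α) * |φ u| := by
    intro u; positivity
  have hgm : AEStronglyMeasurable g volume := by
    simp only [hg]
    apply AEStronglyMeasurable.mul
    · apply Continuous.aestronglyMeasurable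
      apply Continuous.mul
      · exact (continuous_abs.comp (continuous_const.mul continuous_id)).pow m
      · exact Real.continuous_exp.comp
          ((Real.continuous_rpow_const hα0).comp
            (continuous_abs.comp (continuous_const.mul continuous_id)))
    · exact hφint.abs.aestronglyMeasurable
  have hgle : ∀ u : ℝ, g u ≤ (lam ^ m)⁻¹ * (|u| ^ m * Real.exp (|u| ^ α) * |φ u|) := by
    intro u
    have h1 : |lam⁻¹ * u| = lam⁻¹ * |u| := by
      rw [abs_mul, abs_of_pos (inv_pos.mpr hlam0)]
    have h1' : |lam⁻¹ * u| ≤ |u| := by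
      rw [h1]; nlinarith [abs_nonneg u]
    have h3' : Real.exp (|lam⁻¹ * u| ^ α) ≤ Real.exp (|u| ^ α) :=
      Real.exp_le_exp.mpr (Real.rpow_le_rpow (abs_nonneg _) h1' hα0)
    have h2' : |lam⁻¹ * u| ^ m = (lam ^ m)⁻¹ * |u| ^ m := by
      rw [h1, mul_pow, inv_pow]
    simp only [hg]
    rw [h2']
    have hexp : (lam ^ m)⁻¹ * |u| ^ m * Real.exp (|lam⁻¹ * u| ^ α)
        ≤ (lam ^ m)⁻¹ * |u| ^ m * Real.exp (|u| ^ α) := by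
      apply mul_le_mul_of_nonneg_left h3'
      positivity
    calc (lam ^ m)⁻¹ * |u| ^ m * Real.exp (|lam⁻¹ * u| ^ α) * |φ u|
        ≤ (lam ^ m)⁻¹ * |u| ^ m * Real.exp (|u| ^ α) * |φ u| :=
          mul_le_mul_of_nonneg_right hexp (abs_nonneg _)
      _ = (lam ^ m)⁻¹ * (|u| ^ m * Real.exp (|u| ^ α) * |φ u|) := by ring
  have hgint : Integrable g := by
    apply Integrable.mono (hφ2int.const_mul ((lam ^ m)⁻¹)) hgm
    filter_upwards with u
    rw [Real.norm_eq_abs, Real.norm_eq_abs, abs_of_nonneg (hg0 u),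
      abs_of_nonneg (by positivity : (0:ℝ) ≤ (lam ^ m)⁻¹ * (|u| ^ m * Real.exp (|u| ^ α) * |φ u|))]
    exact hgle u
  have hgval : (∫ u, g u) ≤ (lam ^ m)⁻¹ * Cm := by
    calc (∫ u, g u) ≤ ∫ u, (lam ^ m)⁻¹ * (|u| ^ m * Real.exp (|u| ^ α) * |φ u|) :=
          integral_mono hgint (hφ2int.const_mul _) hgle
      _ = (lam ^ m)⁻¹ * ∫ u, |u| ^ m * Real.exp (|u| ^ α) * |φ u| := integral_const_mul _ _
      _ ≤ (lam ^ m)⁻¹ * Cm := by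
          apply mul_le_mul_of_nonneg_left hφ2
          positivity
  have hcomp : ∀ y : ℝ, |y| ^ m * Real.exp (|y| ^ α) * |φ (lam * y)| = g (lam * y) := by
    intro y
    simp only [hg, inv_mul_cancel_left₀ hlam0.ne']
  have hhint : Integrable (fun y => |y| ^ m * Real.exp (|y| ^ α) * |φ (lam * y)|) :=
    (hgint.comp_mul_left' hlam0.ne').congr (ae_of_all _ fun y => (hcomp y).symm)
  have hhval : (∫ y, |y| ^ m * Real.exp (|y| ^ α) * |φ (lam * y)|)
      ≤ lam⁻¹ * ((lam ^ m)⁻¹ * Cm) := by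
    have e1 : (∫ y, |y| ^ m * Real.exp (|y| ^ α) * |φ (lam * y)|) = ∫ y, g (lam * y) :=
      integral_congr_ae (ae_of_all _ hcomp)
    rw [e1, MeasureTheory.Measure.integral_comp_mul_left g lam, abs_of_pos (inv_pos.mpr hlam0),
      smul_eq_mul]
    exact mul_le_mul_of_nonneg_left hgval (inv_pos.mpr hlam0).le
  -- the key inequality
  have key : ∀ k : ℕ, k ≤ m →
      (∀ y : ℝ, 0 ≤ y ^ m * finDiff m (fun u => S u + Fm u) y (x - (k:ℝ) * y)) →
      (∀ y : ℝ, |finDiff m Fm y (x - (k:ℝ) * y)| ≤ |y| ^ m * fm x * Real.exp (|y| ^ α)) →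
      -(((2:ℝ) ^ m - (m.choose k : ℝ)) * lam * M + Cm * fm x / lam ^ m) ≤
        (-1:ℝ) ^ (m - k) * (m.choose k : ℝ) * S x := by
    intro k hk hsign hbnd
    set c : ℕ → ℝ := fun j => (-1:ℝ) ^ (m - j) * (m.choose j : ℝ) with hc
    clear_value c
    have hGeq : ∀ y : ℝ, φ (lam * y) * finDiff m S y (x - (k:ℝ) * y)
        = ∑ j ∈ Finset.range (m+1), c j * T ((j:ℤ) - (k:ℤ)) y := by
      intro y
      unfold finDiff
      rw [Finset.mul_sum]
      apply Finset.sum_congr rfl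
      intro j _
      have harg : x - (k:ℝ)*y + (j:ℝ)*y = x + (((j:ℤ) - (k:ℤ) : ℤ):ℝ)*y := by
        push_cast; ring
      rw [harg]
      simp only [hT, hc]
      ring
    have habs_jk : ∀ j, j ∈ Finset.range (m+1) → |(j:ℤ) - (k:ℤ)| ≤ (m:ℤ) := by
      intro j hj
      have hjm : j ≤ m := Nat.lt_succ_iff.mp (Finset.mem_range.mp hj)
      rw [abs_le]; omega
    have hterm_int : ∀ j ∈ Finset.range (m+1),
        Integrable (fun y => c j * T ((j:ℤ) - (k:ℤ)) y) := by
      intro j hj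
      exact (hTint _ (habs_jk j hj)).const_mul _
    have hGint : Integrable (fun y => φ (lam * y) * finDiff m S y (x - (k:ℝ) * y)) :=
      (integrable_finset_sum _ hterm_int).congr (ae_of_all _ fun y => (hGeq y).symm)
    have hGlow : ∀ y : ℝ, -(fm x * (|y| ^ m * Real.exp (|y| ^ α) * |φ (lam * y)|))
        ≤ φ (lam * y) * finDiff m S y (x - (k:ℝ) * y) := by
      intro y
      have hsplit : finDiff m (fun u => S u + Fm u) y (x - (k:ℝ)*y)
          = finDiff m S y (x - (k:ℝ)*y) + finDiff m Fm y (x - (k:ℝ)*y) :=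
        finDiff_add m S Fm y _
      have hpos : 0 ≤ φ (lam*y) * finDiff m (fun u => S u + Fm u) y (x - (k:ℝ)*y) := by
        by_cases hy : y = 0
        · subst hy
          rw [finDiff_zero_step m hm, mul_zero]
        · have hA := hsign y
          have hB : 0 ≤ y ^ m * φ (lam * y) := by
            have hq := hφ3 (lam * y)
            rw [mul_pow, mul_assoc] at hq
            exact (mul_nonneg_iff_of_pos_left (pow_pos hlam0 m)).mp hq
          have hy2 : 0 < (y ^ m) ^ 2 := by positivity
          have hprod : 0 ≤ (y^m)^2 * (φ (lam*y) *
              finDiff m (fun u => S u + Fm u) y (x - (k:ℝ)*y)) := by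
            nlinarith [mul_nonneg hA hB]
          exact (mul_nonneg_iff_of_pos_left hy2).mp hprod
      have habs : |φ (lam*y) * finDiff m Fm y (x - (k:ℝ)*y)|
          ≤ fm x * (|y|^m * Real.exp (|y|^α) * |φ (lam*y)|) := by
        rw [abs_mul]
        calc |φ (lam*y)| * |finDiff m Fm y (x-(k:ℝ)*y)|
            ≤ |φ (lam*y)| * (|y|^m * fm x * Real.exp (|y|^α)) :=
              mul_le_mul_of_nonneg_left (hbnd y) (abs_nonneg _)
          _ = fm x * (|y|^m * Real.exp (|y|^α) * |φ (lam*y)|) := by ring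
      rw [hsplit, mul_add] at hpos
      have h5 := le_abs_self (φ (lam*y) * finDiff m Fm y (x - (k:ℝ)*y))
      linarith
    have hIntlow : -(fm x * (lam⁻¹ * ((lam ^ m)⁻¹ * Cm)))
        ≤ ∫ y, φ (lam * y) * finDiff m S y (x - (k:ℝ) * y) := by
      have e : (∫ y, -(fm x * (|y| ^ m * Real.exp (|y| ^ α) * |φ (lam * y)|)))
          = -(fm x * ∫ y, |y| ^ m * Real.exp (|y| ^ α) * |φ (lam * y)|) := by
        rw [integral_neg, integral_const_mul]
      have hnegint : Integrable
          (fun y => -(fm x * (|y| ^ m * Real.exp (|y| ^ α) * |φ (lam * y)|))) :=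
        (hhint.const_mul (fm x)).neg
      have step1 := integral_mono hnegint hGint hGlow
      rw [integral_neg, integral_const_mul] at step1
      have step2 : fm x * (∫ y, |y| ^ m * Real.exp (|y| ^ α) * |φ (lam * y)|)
          ≤ fm x * (lam⁻¹ * ((lam ^ m)⁻¹ * Cm)) :=
        mul_le_mul_of_nonneg_left hhval hfm0
      linarith
    have hIntsum : (∫ y, φ (lam * y) * finDiff m S y (x - (k:ℝ) * y))
        = ∑ j ∈ Finset.range (m+1), c j * ∫ y, T ((j:ℤ) - (k:ℤ)) y := by
      calc (∫ y, φ (lam * y) * finDiff m S y (x - (k:ℝ) * y))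
          = ∫ y, ∑ j ∈ Finset.range (m+1), c j * T ((j:ℤ) - (k:ℤ)) y :=
            integral_congr_ae (ae_of_all _ hGeq)
        _ = ∑ j ∈ Finset.range (m+1), ∫ y, c j * T ((j:ℤ) - (k:ℤ)) y :=
            integral_finset_sum _ hterm_int
        _ = ∑ j ∈ Finset.range (m+1), c j * ∫ y, T ((j:ℤ) - (k:ℤ)) y := by
            apply Finset.sum_congr rfl
            intro j _
            exact integral_const_mul _ _
    have hkmem : k ∈ Finset.range (m+1) := Finset.mem_range.mpr (by omega)
    have hksplit : (∑ j ∈ Finset.range (m+1), c j * ∫ y, T ((j:ℤ) - (k:ℤ)) y)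
        = c k * (S x * lam⁻¹)
          + ∑ j ∈ (Finset.range (m+1)).erase k, c j * ∫ y, T ((j:ℤ) - (k:ℤ)) y := by
      rw [← Finset.add_sum_erase _ _ hkmem]
      congr 1
      rw [show ((k:ℤ) - (k:ℤ)) = 0 from sub_self _, hI0]
    set R := ∑ j ∈ (Finset.range (m+1)).erase k, c j * ∫ y, T ((j:ℤ) - (k:ℤ)) y with hR
    have hchoose_sum : (∑ j ∈ (Finset.range (m+1)).erase k, (m.choose j : ℝ))
        = (2:ℝ)^m - (m.choose k : ℝ) := by
      have h1 := Finset.add_sum_erase (Finset.range (m+1)) (fun j => ((m.choose j : ℕ) : ℝ)) hkmem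
      have h2 : (∑ j ∈ Finset.range (m+1), ((m.choose j : ℕ) : ℝ)) = (2:ℝ)^m := by
        rw [← Nat.cast_sum, Nat.sum_range_choose]
        push_cast
        ring
      rw [h2] at h1
      linarith
    have hRabs : |R| ≤ ((2:ℝ)^m - (m.choose k : ℝ)) * M := by
      calc |R| ≤ ∑ j ∈ (Finset.range (m+1)).erase k, |c j * ∫ y, T ((j:ℤ) - (k:ℤ)) y| :=
            Finset.abs_sum_le_sum_abs _ _
        _ ≤ ∑ j ∈ (Finset.range (m+1)).erase k, (m.choose j : ℝ) * M := by
            apply Finset.sum_le_sum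
            intro j hj
            have hne : j ≠ k := (Finset.mem_erase.mp hj).1
            have hjr := (Finset.mem_erase.mp hj).2
            have hjm : j ≤ m := Nat.lt_succ_iff.mp (Finset.mem_range.mp hjr)
            have hcabs : |c j| = (m.choose j : ℝ) := by
              rw [hc]
              rw [abs_mul, abs_pow, abs_neg, abs_one, one_pow, one_mul, Nat.abs_cast]
            rw [abs_mul, hcabs]
            apply mul_le_mul_of_nonneg_left _ (Nat.cast_nonneg _)
            apply hMmax
            · intro hzero
              apply hne
              have : (j:ℤ) = (k:ℤ) := by omega
              exact_mod_cast this
            · exact habs_jk j hjr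
        _ = ((2:ℝ)^m - (m.choose k : ℝ)) * M := by rw [← Finset.sum_mul, hchoose_sum]
    -- put everything together
    have hmain : -(fm x * (lam⁻¹ * ((lam ^ m)⁻¹ * Cm))) ≤ c k * (S x * lam⁻¹) + R := by
      rw [← hksplit, ← hIntsum]
      exact hIntlow
    have hA : -(fm x * (lam⁻¹ * ((lam ^ m)⁻¹ * Cm))) - ((2:ℝ)^m - (m.choose k : ℝ)) * M
        ≤ c k * (S x * lam⁻¹) := by
      have := (abs_le.mp hRabs).2
      linarith
    have hmul := mul_le_mul_of_nonneg_left hA hlam0.le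
    have hlamne : lam ≠ 0 := hlam0.ne'
    have hlampow : (lam:ℝ) ^ m ≠ 0 := pow_ne_zero m hlamne
    have hId : lam * (c k * (S x * lam⁻¹)) = c k * S x := by
      field_simp
    have hId2 : lam * (-(fm x * (lam⁻¹ * ((lam ^ m)⁻¹ * Cm)))
          - ((2:ℝ)^m - (m.choose k : ℝ)) * M)
        = -(((2:ℝ)^m - (m.choose k : ℝ)) * lam * M + Cm * fm x / lam ^ m) := by
      field_simp
      ring
    rw [hId, hId2] at hmul
    rw [hc] at hmul
    exact hmul
  -- instantiations of key
  have key_m : -(((2:ℝ)^m - 1) * lam * M + Cm * fm x / lam ^ m) ≤ S x := by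
    have sign_m : ∀ y : ℝ, 0 ≤ y ^ m * finDiff m (fun u => S u + Fm u) y (x - (m:ℝ) * y) := by
      intro y
      have h := h2 x hX (-y)
      rw [finDiff_neg, ← mul_assoc, ← mul_pow, show (-y) * (-1:ℝ) = y by ring] at h
      exact h
    have bnd_m : ∀ y : ℝ, |finDiff m Fm y (x - (m:ℝ) * y)|
        ≤ |y| ^ m * fm x * Real.exp (|y| ^ α) := by
      intro y
      have h := h3 x hX (-y)
      rw [finDiff_neg, abs_mul, abs_pow, abs_neg, abs_one, one_pow, one_mul, abs_neg] at h
      exact h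
    have h := key m le_rfl sign_m bnd_m
    simpa [Nat.choose_self] using h
  have hE0 : 0 ≤ Cm * fm x / lam ^ m := by positivity
  have hlamM : 0 ≤ lam * M := mul_nonneg hlam0.le hM0
  have hb1 : ((2:ℝ)^m - 1) * lam * M ≤ 2 ^ m * lam * M := by nlinarith [hlamM]
  have hgoal : |S x| ≤ 2 ^ m * lam * M + Cm * fm x / lam ^ m := by
    rcases Nat.even_or_odd m with hme | hmo
    · -- even case : use k = 1 for the upper bound
      have sign_1 : ∀ y : ℝ, 0 ≤ y ^ m * finDiff m (fun u => S u + Fm u) y (x - ((1:ℕ):ℝ) * y) := by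
        intro y
        rcases le_or_gt 0 y with hy | hy
        · have hm1 : (1:ℝ) ≤ (m:ℝ) := by exact_mod_cast hm
          have hX' : X ≤ x + ((m:ℝ) - 1) * y := by nlinarith
          have h := h2 _ hX' (-y)
          rw [finDiff_neg, show x + ((m:ℝ)-1)*y - (m:ℝ)*y = x - ((1:ℕ):ℝ)*y by push_cast; ring,
            ← mul_assoc, ← mul_pow, show (-y) * (-1:ℝ) = y by ring] at h
          exact h
        · have h := h2 (x - y) (by linarith) y
          rw [show x - ((1:ℕ):ℝ)*y = x - y by push_cast; ring]
          exact h
      have bnd_1 : ∀ y : ℝ, |finDiff m Fm y (x - ((1:ℕ):ℝ) * y)|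
          ≤ |y| ^ m * fm x * Real.exp (|y| ^ α) := by
        intro y
        rw [show x - ((1:ℕ):ℝ)*y = x - y by push_cast; ring]
        exact h4 hme x hX y
      have hkey1 := key 1 hm sign_1 bnd_1
      have hodd : Odd (m - 1) := Nat.Even.sub_odd hm hme odd_one
      rw [Nat.choose_one_right, hodd.neg_one_pow] at hkey1
      have hup : (m:ℝ) * S x ≤ ((2:ℝ)^m - (m:ℝ)) * lam * M + Cm * fm x / lam ^ m := by
        linarith [hkey1]
      have hmR : (1:ℝ) ≤ (m:ℝ) := by exact_mod_cast hm
      have h2m : (1:ℝ) ≤ (2:ℝ)^m := one_le_pow₀ (by norm_num)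
      rw [abs_le]
      constructor
      · linarith [key_m, hb1]
      · have hup2 : (m:ℝ) * S x ≤ (m:ℝ) * (2 ^ m * lam * M + Cm * fm x / lam ^ m) := by
          nlinarith [hup, hlamM, hE0,
            mul_nonneg (mul_nonneg (by linarith : (0:ℝ) ≤ (m:ℝ) - 1)
              (by positivity : (0:ℝ) ≤ (2:ℝ)^m)) hlamM,
            mul_nonneg (by linarith : (0:ℝ) ≤ (m:ℝ) - 1) hE0]
        exact le_of_mul_le_mul_left hup2 (by linarith : (0:ℝ) < (m:ℝ))
    · -- odd case : use k = 0 for the upper bound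
      have sign_0 : ∀ y : ℝ, 0 ≤ y ^ m * finDiff m (fun u => S u + Fm u) y (x - ((0:ℕ):ℝ) * y) := by
        intro y
        rw [show x - ((0:ℕ):ℝ)*y = x by push_cast; ring]
        exact h2 x hX y
      have bnd_0 : ∀ y : ℝ, |finDiff m Fm y (x - ((0:ℕ):ℝ) * y)|
          ≤ |y| ^ m * fm x * Real.exp (|y| ^ α) := by
        intro y
        rw [show x - ((0:ℕ):ℝ)*y = x by push_cast; ring]
        exact h3 x hX y
      have hkey0 := key 0 (Nat.zero_le m) sign_0 bnd_0
      rw [Nat.choose_zero_right, Nat.sub_zero, hmo.neg_one_pow] at hkey0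
      rw [abs_le]
      constructor
      · linarith [key_m, hb1]
      · linarith [hkey0, hb1]
  refine ⟨j₀, ?_, ?_, ?_⟩
  · exact (Finset.mem_erase.mp (by rwa [hJs] at hj₀mem)).1
  · have := Finset.mem_Icc.mp (Finset.mem_erase.mp (by rwa [hJs] at hj₀mem)).2
    rw [abs_le]; exact this
  · have : M = |∫ y, S (x + (j₀:ℝ) * y) * φ (lam * y)| := by
      rw [hMdef, hT]
    rw [← this]
    exact hgoal
end

section
/- Let p ∈ [1,∞] with conjugate exponent q (1/p + 1/q = 1), let 𝔤 : ℝ → ℂ be continuous, G : ℝ → (0,∞) locally integrable, ω : (0,∞) → (0,∞) non-decreasing, δ₀ > 0 and C > 0, and suppose that ‖ (sup_{|u| ≤ δ} |𝔤(t+u) − 𝔤(t)|) / G(t) ‖_{L^p(ℝ, dt)} ≤ C ω(δ) for all 0 < δ ≤ δ₀. Then for every fixed δ with 0 < δ ≤ δ₀ there exists a constant C' > 0, depending only on C, ω(δ) and δ, such that for all λ > δ: ∫_0^λ |𝔤(t)| dt ≤ C' ( |𝔤(0)| λ + λ ‖G·χ_{(-λ,λ)}‖_{L^q(ℝ)} ),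 where χ_{(-λ,λ)} is the indicator function of (−λ,λ). -/
/-!
Let `F t = sup_{|u| ≤ δ} ‖𝔤 (t + u) - 𝔤 t‖`, so that `‖𝔤 t - 𝔤 (t - s)‖ ≤ F t` for
`0 ≤ s ≤ δ`. Walking from `t` back to `0` in steps of length `δ` gives
`‖𝔤 t - 𝔤 0‖ ≤ ∑_{j ≤ n, jδ ≤ t} F (t - jδ)` for `t ≤ (n + 1) δ`. Integrating over `(0, λ]`,
each translate contributes at most `∫_0^λ F`, and there are about `λ / δ` of them. Finally
`∫_0^λ F = ∫ (F / G) (G χ_{(-λ,λ)}) ≤ C ω(δ) ‖G χ‖_q` by Hölder.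
-/

open MeasureTheory Set
open scoped ENNReal

noncomputable def localOsc {E : Type*} [NormedAddCommGroup E] (g : ℝ → E) (δ t : ℝ) : ℝ :=
  ⨆ u ∈ Icc (-δ) δ, ‖g (t + u) - g t‖

section LocalOsc

variable {E : Type*} [NormedAddCommGroup E] {g : ℝ → E} {δ : ℝ}

theorem localOsc_nonneg (g : ℝ → E) (δ t : ℝ) : 0 ≤ localOsc g δ t :=
  Real.iSup_nonneg fun _ => Real.iSup_nonneg fun _ => norm_nonneg _

theorem bddAbove_image_norm_sub (hg : Continuous g) (δ t : ℝ) :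
    BddAbove ((fun u => ‖g (t + u) - g t‖) '' Icc (-δ) δ) :=
  isCompact_Icc.bddAbove_image (by fun_prop)

theorem localOsc_eq_sSup_image (hg : Continuous g) (δ t : ℝ) :
    localOsc g δ t = sSup ((fun u => ‖g (t + u) - g t‖) '' Icc (-δ) δ) := by
  refine (csSup_image ?_ ?_).symm
  · simpa only [image_eq_range] using bddAbove_image_norm_sub hg δ t
  · rw [Real.sSup_empty]
    exact Real.iSup_nonneg fun _ => norm_nonneg _

theorem norm_sub_le_localOsc (hg : Continuous g) (t : ℝ) {u : ℝ} (hu : u ∈ Icc (-δ) δ) :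
    ‖g (t + u) - g t‖ ≤ localOsc g δ t := by
  rw [localOsc_eq_sSup_image hg]
  exact le_csSup (bddAbove_image_norm_sub hg δ t) (mem_image_of_mem _ hu)

theorem continuous_localOsc (hg : Continuous g) (δ : ℝ) : Continuous (localOsc g δ) := by
  rw [funext (localOsc_eq_sSup_image hg δ)]
  exact isCompact_Icc.continuous_sSup (f := fun t u => ‖g (t + u) - g t‖) (by fun_prop)

end LocalOsc

section Telescoping

variable {E : Type*} [NormedAddCommGroup E] {g : ℝ → E} {δ : ℝ}

theorem indicator_shift_sub (F : ℝ → ℝ) (δ : ℝ) (j : ℕ) (t : ℝ) :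
    (Ici (j * δ)).indicator (fun r => F (r - j * δ)) (t - δ) =
      (Ici ((j + 1 : ℕ) * δ)).indicator (fun r => F (r - (j + 1 : ℕ) * δ)) t := by
  simp only [indicator_apply, mem_Ici, le_sub_iff_add_le, sub_sub]
  push_cast
  ring_nf

theorem norm_sub_le_sum_indicator_shift {F : ℝ → ℝ} (hδ : 0 ≤ δ)
    (hF : ∀ t s, 0 ≤ s → s ≤ δ → ‖g t - g (t - s)‖ ≤ F t) (n : ℕ) {t : ℝ} (ht₀ : 0 ≤ t)
    (ht : t ≤ (n + 1) * δ) :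
    ‖g t - g 0‖ ≤
      ∑ j ∈ Finset.range (n + 1), (Ici (j * δ)).indicator (fun r => F (r - j * δ)) t := by
  have hF₀ : ∀ t, 0 ≤ F t := fun t => by simpa using hF t 0 le_rfl hδ
  have hsmall : ∀ t, 0 ≤ t → t ≤ δ → ‖g t - g 0‖ ≤ F t := fun t ht₀ ht => by
    simpa using hF t t ht₀ ht
  induction n generalizing t with
  | zero => simpa [ht₀] using hsmall t ht₀ (by simpa using ht)
  | succ n ih =>
    rw [Finset.sum_range_succ']
    simp only [Nat.cast_zero, zero_mul, sub_zero, indicator_of_mem (mem_Ici.2 ht₀)]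
    rcases le_or_gt t δ with htδ | hδt
    · exact (hsmall t ht₀ htδ).trans (le_add_of_nonneg_left
        (Finset.sum_nonneg fun j _ => indicator_nonneg (fun r _ => hF₀ _) t))
    · calc ‖g t - g 0‖ ≤ ‖g t - g (t - δ)‖ + ‖g (t - δ) - g 0‖ :=
            norm_sub_le_norm_sub_add_norm_sub _ _ _
        _ ≤ F t + ∑ j ∈ Finset.range (n + 1),
              (Ici (j * δ)).indicator (fun r => F (r - j * δ)) (t - δ) :=
          add_le_add (hF t δ hδ le_rfl) (ih (by linarith) (by push_cast at ht; linarith))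
        _ = _ := by simp only [indicator_shift_sub, add_comm]

end Telescoping

theorem setIntegral_Ioc_indicator_shift_le {F : ℝ → ℝ} (hF : Continuous F) (hF₀ : 0 ≤ F)
    {c : ℝ} (hc : 0 ≤ c) (lam : ℝ) :
    ∫ t in Ioc 0 lam, (Ici c).indicator (fun r => F (r - c)) t ≤ ∫ t in Icc 0 lam, F t := by
  rw [setIntegral_indicator measurableSet_Ici]
  calc ∫ t in Ioc 0 lam ∩ Ici c, F (t - c)
      ≤ ∫ t in (· - c) ⁻¹' Icc 0 lam, F (t - c) := by
        refine setIntegral_mono_set ?_ (ae_of_all _ fun t => hF₀ (t - c))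
          (LE.le.eventuallyLE ?_)
        · rw [preimage_sub_const_Icc]
          exact (hF.comp (continuous_sub_right c)).integrableOn_Icc
        · rintro t ⟨⟨-, ht⟩, hct⟩
          exact ⟨sub_nonneg.2 hct, by simp only; linarith⟩
    _ = ∫ t in Icc 0 lam, F t :=
        (measurePreserving_sub_right volume c).setIntegral_preimage_emb
          (measurableEmbedding_subRight c) _ _

section Integral

variable {E : Type*} [NormedAddCommGroup E] {g : ℝ → E} {δ lam : ℝ}

theorem integral_norm_le_of_le_mul (hg : Continuous g) (hδ : 0 ≤ δ) (hlam : 0 ≤ lam) (n : ℕ)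
    (hn : lam ≤ (n + 1) * δ) :
    ∫ t in Ioc 0 lam, ‖g t‖ ≤ ‖g 0‖ * lam + (n + 1) * ∫ t in Icc 0 lam, localOsc g δ t := by
  set F := localOsc g δ
  have hF : Continuous F := continuous_localOsc hg δ
  have hF₀ : 0 ≤ F := localOsc_nonneg g δ
  have hhop : ∀ t s, 0 ≤ s → s ≤ δ → ‖g t - g (t - s)‖ ≤ F t := fun t s hs hsδ => by
    have := norm_sub_le_localOsc hg t (show -s ∈ Icc (-δ) δ from ⟨neg_le_neg hsδ, by linarith⟩)
    rwa [← sub_eq_add_neg, norm_sub_rev] at this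
  have hint (j : ℕ) :
      IntegrableOn ((Ici (j * δ)).indicator fun r => F (r - j * δ)) (Ioc 0 lam) :=
    (hF.comp (continuous_sub_right _)).integrableOn_Ioc.indicator measurableSet_Ici
  have hconst : IntegrableOn (fun _ => ‖g 0‖) (Ioc 0 lam) :=
    integrableOn_const measure_Ioc_lt_top.ne
  have hsum := integrable_finsetSum (Finset.range (n + 1)) fun j _ => hint j
  calc ∫ t in Ioc 0 lam, ‖g t‖
      ≤ ∫ t in Ioc 0 lam, (‖g 0‖ + ∑ j ∈ Finset.range (n + 1),
          (Ici (j * δ)).indicator (fun r => F (r - j * δ)) t) := by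
        refine setIntegral_mono_on hg.norm.integrableOn_Ioc (hconst.add hsum) measurableSet_Ioc
          fun t ht => (norm_le_norm_add_norm_sub' _ (g 0)).trans (add_le_add le_rfl ?_)
        exact norm_sub_le_sum_indicator_shift hδ hhop n ht.1.le (ht.2.trans hn)
    _ = ‖g 0‖ * lam + ∑ j ∈ Finset.range (n + 1),
          ∫ t in Ioc 0 lam, (Ici (j * δ)).indicator (fun r => F (r - j * δ)) t := by
        rw [integral_add hconst hsum, integral_finsetSum _ fun j _ => hint j,
          setIntegral_const, Measure.real, Real.volume_Ioc, ENNReal.toReal_ofReal (by linarith),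
          smul_eq_mul, sub_zero, mul_comm]
    _ ≤ ‖g 0‖ * lam + ∑ _j ∈ Finset.range (n + 1), ∫ t in Icc 0 lam, F t := by
        gcongr with j
        exact setIntegral_Ioc_indicator_shift_le hF hF₀ (by positivity) lam
    _ = ‖g 0‖ * lam + (n + 1) * ∫ t in Icc 0 lam, F t := by
        simp

theorem integral_norm_le (hg : Continuous g) (hδ : 0 < δ) (hδlam : δ ≤ lam) :
    ∫ t in Ioc 0 lam, ‖g t‖ ≤ ‖g 0‖ * lam + 3 * lam / δ * ∫ t in Icc 0 lam, localOsc g δ t := by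
  set n := ⌈lam / δ⌉₊
  have hlam_div : 1 ≤ lam / δ := (one_le_div hδ).2 hδlam
  have hn : lam ≤ (n + 1) * δ := by
    have := Nat.le_ceil (lam / δ)
    rw [div_le_iff₀ hδ] at this
    nlinarith
  have hn' : (n + 1 : ℝ) ≤ 3 * lam / δ := by
    have := Nat.ceil_lt_add_one (by positivity : 0 ≤ lam / δ)
    rw [mul_div_assoc]
    linarith
  refine (integral_norm_le_of_le_mul hg hδ.le (hδ.le.trans hδlam) n hn).trans ?_
  gcongr
  exact setIntegral_nonneg measurableSet_Icc fun t _ => localOsc_nonneg g δ t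

end Integral

theorem setLIntegral_enorm_le_eLpNorm_div_mul {α : Type*} [MeasurableSpace α] {μ : Measure α}
    {p q : ℝ≥0∞} [ENNReal.HolderTriple p q 1] {F G : α → ℝ} {s : Set α} (hs : MeasurableSet s)
    (hF : AEStronglyMeasurable F μ) (hG : AEStronglyMeasurable G μ) (hG₀ : ∀ x ∈ s, G x ≠ 0) :
    ∫⁻ x in s, ‖F x‖ₑ ∂μ ≤ eLpNorm (fun x => F x / G x) p μ * eLpNorm (s.indicator G) q μ := by
  calc ∫⁻ x in s, ‖F x‖ₑ ∂μ = eLpNorm ((fun x => F x / G x) • s.indicator G) 1 μ := by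
        rw [eLpNorm_one_eq_lintegral_enorm, ← lintegral_indicator hs]
        congr 1
        ext x
        by_cases hx : x ∈ s
        · simp [hx, hG₀ x hx]
        · simp [hx]
    _ ≤ _ := eLpNorm_smul_le_mul_eLpNorm (hG.indicator hs)
      (hF.aemeasurable.div hG.aemeasurable).aestronglyMeasurable

theorem ofReal_integral_Icc_le_eLpNorm_div_mul {p q : ℝ≥0∞} [ENNReal.HolderTriple p q 1]
    {F G : ℝ → ℝ} (hF : Continuous F) (hF₀ : 0 ≤ F) (hG : AEStronglyMeasurable G)
    {lam : ℝ} (hG₀ : ∀ t ∈ Ioo (-lam) lam, G t ≠ 0) (hlam : 0 ≤ lam) :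
    ENNReal.ofReal (∫ t in Icc 0 lam, F t) ≤
      eLpNorm (fun t => F t / G t) p volume * eLpNorm ((Ioo (-lam) lam).indicator G) q volume :=
  calc ENNReal.ofReal (∫ t in Icc 0 lam, F t) = ∫⁻ t in Icc 0 lam, ‖F t‖ₑ := by
        rw [ofReal_integral_eq_lintegral_ofReal hF.integrableOn_Icc (ae_of_all _ hF₀),
          lintegral_enorm_of_nonneg hF₀]
    _ ≤ ∫⁻ t in Ioo (-lam) lam, ‖F t‖ₑ := by
        refine lintegral_mono_set' (Ioo_ae_eq_Icc.symm.le.trans (LE.le.eventuallyLE ?_))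
        exact Ioo_subset_Ioo_left (by linarith)
    _ ≤ _ := setLIntegral_enorm_le_eLpNorm_div_mul measurableSet_Ioo hF.aestronglyMeasurable hG hG₀

theorem stmt_16_general (p q : ℝ≥0∞) (hpq : p⁻¹ + q⁻¹ = 1)
    (𝔤 : ℝ → ℂ) (h𝔤 : Continuous 𝔤)
    (G : ℝ → ℝ) (hGpos : ∀ t, 0 < G t) (hGloc : LocallyIntegrable G)
    (ω : ℝ → ℝ)
    (δ₀ C : ℝ)
    (hHC : ∀ δ : ℝ, 0 < δ → δ ≤ δ₀ →
      eLpNorm (fun t => (⨆ u ∈ Set.Icc (-δ) δ, ‖𝔤 (t + u) - 𝔤 t‖) / G t) p volume ≤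
        ENNReal.ofReal (C * ω δ)) :
    ∀ δ : ℝ, 0 < δ → δ ≤ δ₀ →
      ∃ C' : ℝ, 0 < C' ∧ ∀ lam : ℝ, δ < lam →
        ENNReal.ofReal (∫ t in Set.Ioc (0:ℝ) lam, ‖𝔤 t‖) ≤
          ENNReal.ofReal (C' * (‖𝔤 0‖ * lam)) +
            ENNReal.ofReal (C' * lam) *
              eLpNorm (Set.indicator (Set.Ioo (-lam) lam) G) q volume := by
  intro δ hδ hδδ₀
  set K := max 1 (3 * (C * ω δ) / δ)
  refine ⟨K, one_pos.trans_le (le_max_left _ _), fun lam hlam => ?_⟩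
  have : ENNReal.HolderTriple p q 1 := ⟨by rw [hpq, inv_one]⟩
  have hlam₀ : 0 < lam := hδ.trans hlam
  set B := ∫ t in Icc 0 lam, localOsc 𝔤 δ t
  set Q := eLpNorm ((Ioo (-lam) lam).indicator G) q volume
  have hB : ENNReal.ofReal B ≤ ENNReal.ofReal (C * ω δ) * Q :=
    (ofReal_integral_Icc_le_eLpNorm_div_mul (continuous_localOsc h𝔤 δ) (localOsc_nonneg 𝔤 δ)
      hGloc.aestronglyMeasurable (fun t _ => (hGpos t).ne') hlam₀.le).trans
      (by gcongr; exact hHC δ hδ hδδ₀)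
  calc ENNReal.ofReal (∫ t in Ioc 0 lam, ‖𝔤 t‖)
      ≤ ENNReal.ofReal (‖𝔤 0‖ * lam) + ENNReal.ofReal (3 * lam / δ) * ENNReal.ofReal B := by
        rw [← ENNReal.ofReal_mul (by positivity)]
        exact (ENNReal.ofReal_le_ofReal (integral_norm_le h𝔤 hδ hlam.le)).trans
          ENNReal.ofReal_add_le
    _ ≤ ENNReal.ofReal (K * (‖𝔤 0‖ * lam)) +
          ENNReal.ofReal (3 * lam / δ) * (ENNReal.ofReal (C * ω δ) * Q) := by
        gcongr ENNReal.ofReal ?_ + _ * ?_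
        exact le_mul_of_one_le_left (by positivity) (le_max_left _ _)
    _ = ENNReal.ofReal (K * (‖𝔤 0‖ * lam)) +
          ENNReal.ofReal (3 * (C * ω δ) / δ * lam) * Q := by
        rw [← mul_assoc (ENNReal.ofReal _), ← ENNReal.ofReal_mul (by positivity)]
        congr 3
        ring
    _ ≤ ENNReal.ofReal (K * (‖𝔤 0‖ * lam)) + ENNReal.ofReal (K * lam) * Q := by
        gcongr
        exact le_max_right _ _

/-- The estimate `∫_0^λ |𝔤(t)| dt ≪ |𝔤(0)|λ + λ‖G·χ_{(-λ,λ)}‖_{L^q}` for a continuous function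
`𝔤` that is uniformly Hölder continuous with respect to `L^p`, `G` and `ω`. -/
theorem stmt_16 (p q : ℝ≥0∞) (hp : 1 ≤ p) (hq : 1 ≤ q) (hpq : p⁻¹ + q⁻¹ = 1)
    (𝔤 : ℝ → ℂ) (h𝔤 : Continuous 𝔤)
    (G : ℝ → ℝ) (hGpos : ∀ t, 0 < G t) (hGloc : LocallyIntegrable G)
    (ω : ℝ → ℝ) (hωmono : MonotoneOn ω (Set.Ioi 0)) (hωpos : ∀ y, 0 < y → 0 < ω y)
    (δ₀ C : ℝ) (hδ₀ : 0 < δ₀) (hC : 0 < C)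
    (hHC : ∀ δ : ℝ, 0 < δ → δ ≤ δ₀ →
      eLpNorm (fun t => (⨆ u ∈ Set.Icc (-δ) δ, ‖𝔤 (t + u) - 𝔤 t‖) / G t) p volume ≤
        ENNReal.ofReal (C * ω δ)) :
    ∀ δ : ℝ, 0 < δ → δ ≤ δ₀ →
      ∃ C' : ℝ, 0 < C' ∧ ∀ lam : ℝ, δ < lam →
        ENNReal.ofReal (∫ t in Set.Ioc (0:ℝ) lam, ‖𝔤 t‖) ≤
          ENNReal.ofReal (C' * (‖𝔤 0‖ * lam)) +
            ENNReal.ofReal (C' * lam) *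
              eLpNorm (Set.indicator (Set.Ioo (-lam) lam) G) q volume :=
  stmt_16_general p q hpq 𝔤 h𝔤 G hGpos hGloc ω δ₀ C hHC
end

section
/- Let N ≥ 1 be an integer, D > 0, and let g : ℝ → ℂ be N times differentiable with g^{(N)} locally integrable and |g^{(j)}(0)| ≤ D for 0 ≤ j ≤ N−1. Let φ̂ : ℝ → ℂ be a smooth function with compact support contained in (−1,1). Then there exists a constant C, depending only on N, D and φ̂ (via the suprema of |φ̂^{(j)}| for j ≤ N), such that for all x > 0 and all λ ≥ 1: |∫_{-∞}^{∞} g(t) e^{ixt} φ̂(−t/λ) dt| ≤ C x^{-N} ( 1 + ∫_{-λ}^{λ} |g^{(N)}(t)| dt ). -/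
set_option maxHeartbeats 1000000

open MeasureTheory

lemma aux_vanish {θ : ℝ → ℂ} (hsupp : tsupport θ ⊆ Set.Ioo (-1:ℝ) 1) {lam : ℝ}
    (hlam : 0 < lam) {t : ℝ} (ht : t ∉ Set.Ioc (-lam) lam) : θ (-t/lam) = 0 := by
  apply image_eq_zero_of_notMem_tsupport
  intro hmem
  have h2 := hsupp hmem
  simp only [Set.mem_Ioo] at h2
  simp only [Set.mem_Ioc, not_and_or, not_lt, not_le] at ht
  rcases ht with h | h
  · have : (1:ℝ) ≤ -t/lam := by rw [le_div_iff₀ hlam]; linarith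
    linarith [h2.2]
  · have : -t/lam < -1 := by rw [div_lt_iff₀ hlam]; linarith
    linarith [h2.1]

lemma aux_integrable {f θ : ℝ → ℂ} {lam x : ℝ} (hlam : 0 < lam)
    (hf : IntegrableOn f (Set.Ioc (-lam) lam)) (hθc : Continuous θ)
    (hθsupp : tsupport θ ⊆ Set.Ioo (-1:ℝ) 1) :
    Integrable (fun t => f t * θ (-t/lam) * Complex.exp (↑(x*t) * Complex.I)) := by
  have hcs : HasCompactSupport θ :=
    IsCompact.of_isClosed_subset isCompact_Icc (isClosed_tsupport θ)
      (hθsupp.trans Set.Ioo_subset_Icc_self)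
  obtain ⟨C, hC⟩ := hθc.bounded_above_of_compact_support hcs
  apply IntegrableOn.integrable_of_forall_notMem_eq_zero (s := Set.Ioc (-lam) lam)
  · have hcont : Continuous fun t : ℝ => θ (-t/lam) * Complex.exp (↑(x*t) * Complex.I) := by
      apply Continuous.mul
      · exact hθc.comp ((continuous_id.neg).div_const lam)
      · exact Complex.continuous_exp.comp
          ((Complex.continuous_ofReal.comp (continuous_const.mul continuous_id)).mul
            continuous_const)
    have hb : ∀ t : ℝ, ‖θ (-t/lam) * Complex.exp (↑(x*t) * Complex.I)‖ ≤ C := by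
      intro t
      rw [norm_mul, Complex.norm_exp_ofReal_mul_I, mul_one]
      exact hC _
    have := hf.bdd_mul hcont.aestronglyMeasurable (Filter.Eventually.of_forall hb)
    exact this.congr (Filter.Eventually.of_forall fun t => by ring)
  · intro t ht
    rw [aux_vanish hθsupp hlam ht]
    ring

lemma aux_smul_supp {θ : ℝ → ℂ} (hθsupp : tsupport θ ⊆ Set.Ioo (-1:ℝ) 1) (c : ℝ) :
    tsupport (fun s => c • deriv θ s) ⊆ Set.Ioo (-1:ℝ) 1 := by
  have hθ'supp : tsupport (deriv θ) ⊆ Set.Ioo (-1:ℝ) 1 :=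
    (closure_minimal support_deriv_subset (isClosed_tsupport θ)).trans hθsupp
  refine Set.Subset.trans (closure_mono ?_) hθ'supp
  intro s hs
  simp only [Function.mem_support, ne_eq] at hs ⊢
  intro h0
  exact hs (by rw [h0, smul_zero])

lemma aux_itsmul {c : ℝ} {h : ℝ → ℂ} (hsm : ContDiff ℝ ((⊤:ℕ∞)) h) (k : ℕ) :
    iteratedDeriv k (fun s => c • h s) = fun s => c • iteratedDeriv k h s := by
  induction k with
  | zero => simp
  | succ k ih =>
    rw [iteratedDeriv_succ, ih, iteratedDeriv_succ]
    funext s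
    exact deriv_const_smul c ((hsm.differentiable_iteratedDeriv k
      (by exact_mod_cast WithTop.coe_lt_top k)) s)

lemma aux_step {lam x : ℝ} (hlam : 1 ≤ lam) (hx : 0 < x)
    {u u' : ℝ → ℂ} (hu : ∀ t, HasDerivAt u (u' t) t)
    {θ : ℝ → ℂ} (hθsm : ContDiff ℝ ((⊤:ℕ∞)) θ) (hθsupp : tsupport θ ⊆ Set.Ioo (-1:ℝ) 1)
    (hu'int : IntegrableOn u' (Set.Ioc (-lam) lam))
    (huint : IntegrableOn u (Set.Ioc (-lam) lam)) :
    x * ‖∫ t : ℝ, u t * θ (-t/lam) * Complex.exp (↑(x*t) * Complex.I)‖ ≤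
      ‖∫ t : ℝ, u' t * θ (-t/lam) * Complex.exp (↑(x*t) * Complex.I)‖ +
      ‖∫ t : ℝ, u t * ((-1/lam : ℝ) • deriv θ (-t/lam)) * Complex.exp (↑(x*t) * Complex.I)‖ := by
  have hlam0 : (0:ℝ) < lam := by linarith
  set E : ℝ → ℂ := fun t => Complex.exp (↑(x*t) * Complex.I) with hE
  set θ₂ : ℝ → ℂ := fun s => (-1/lam : ℝ) • deriv θ s with hθ₂
  have hθc : Continuous θ := hθsm.continuous
  have hθ'sm : ContDiff ℝ ((⊤:ℕ∞)) (deriv θ) := (contDiff_infty_iff_deriv.mp hθsm).2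
  have hθ₂supp : tsupport θ₂ ⊆ Set.Ioo (-1:ℝ) 1 := aux_smul_supp hθsupp _
  have hθ₂c : Continuous θ₂ := by exact hθ'sm.continuous.const_smul (-1/lam : ℝ)
  set A : ℝ → ℂ := fun t => u' t * θ (-t/lam) * E t with hA
  set B : ℝ → ℂ := fun t => u t * θ₂ (-t/lam) * E t with hB
  set Cc : ℝ → ℂ := fun t => u t * θ (-t/lam) * E t with hCc
  have hAint : Integrable A := aux_integrable hlam0 hu'int hθc hθsupp
  have hBint : Integrable B := aux_integrable hlam0 huint hθ₂c hθ₂supp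
  have hCint : Integrable Cc := aux_integrable hlam0 huint hθc hθsupp
  set f : ℝ → ℂ := fun t => A t + B t + (↑x * Complex.I) * Cc t with hf
  have hderiv : ∀ t, HasDerivAt Cc (f t) t := by
    intro t
    have hinner : HasDerivAt (fun s : ℝ => -s/lam) (-1/lam) t := by
      simpa using (hasDerivAt_id t).neg.div_const lam
    have hχ : HasDerivAt (fun s : ℝ => θ (-s/lam)) ((-1/lam : ℝ) • deriv θ (-t/lam)) t :=
      HasDerivAt.scomp (𝕜 := ℝ) t
        ((hθsm.differentiable (by simp) (-t/lam)).hasDerivAt) hinner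
    have h1 : HasDerivAt (fun s : ℝ => x * s) x t := by
      simpa using (hasDerivAt_id t).const_mul x
    have h3 : HasDerivAt E (E t * (↑x * Complex.I)) t := by
      simpa [hE] using (h1.ofReal_comp.mul_const Complex.I).cexp
    have := ((hu t).mul hχ).mul h3
    have heq : f t = (u' t * θ (-t/lam) + u t * ((-1/lam : ℝ) • deriv θ (-t/lam))) * E t
        + u t * θ (-t/lam) * (E t * (↑x * Complex.I)) := by
      simp only [hf, hA, hB, hCc, hθ₂, Complex.real_smul]
      push_cast
      ring
    rw [heq]
    exact this
  have hfint : Integrable f := (hAint.add hBint).add (hCint.const_mul _)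
  have hΘvanish : ∀ t, t ∉ Set.Ioc (-lam) lam → f t = 0 := by
    intro t ht
    have h1 : θ (-t/lam) = 0 := aux_vanish hθsupp hlam0 ht
    have h2 : θ₂ (-t/lam) = 0 := aux_vanish hθ₂supp hlam0 ht
    simp only [hf, hA, hB, hCc]
    rw [h1, h2]
    ring
  have hzero : (∫ t : ℝ, f t) = 0 := by
    rw [← setIntegral_eq_integral_of_forall_compl_eq_zero hΘvanish,
      ← intervalIntegral.integral_of_le (by linarith : -lam ≤ lam),
      intervalIntegral.integral_eq_sub_of_hasDerivAt (fun t _ => hderiv t)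
        hfint.intervalIntegrable]
    have hm1 : -lam/lam = -1 := by rw [neg_div, div_self hlam0.ne']
    have hp1 : -(-lam)/lam = 1 := by rw [neg_neg, div_self hlam0.ne']
    have hθm1 : θ (-lam/lam) = 0 := by
      rw [hm1]
      exact image_eq_zero_of_notMem_tsupport fun h => absurd (hθsupp h).1 (lt_irrefl _)
    have hθp1 : θ (-(-lam)/lam) = 0 := by
      rw [hp1]
      exact image_eq_zero_of_notMem_tsupport fun h => absurd (hθsupp h).2 (lt_irrefl _)
    have e1 : Cc lam = 0 := by simp only [hCc]; rw [hθm1]; ring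
    have e2 : Cc (-lam) = 0 := by simp only [hCc]; rw [hθp1]; ring
    rw [e1, e2, sub_zero]
  have hsplit : (∫ t : ℝ, A t) + (∫ t : ℝ, B t) + (↑x * Complex.I) * (∫ t : ℝ, Cc t) = 0 := by
    have hABint : Integrable (fun t => A t + B t) := hAint.add hBint
    have hC2 : Integrable (fun t => (↑x * Complex.I) * Cc t) := hCint.const_mul _
    rw [hf] at hzero
    beta_reduce at hzero
    rw [integral_add hABint hC2, integral_add hAint hBint,
      MeasureTheory.integral_const_mul] at hzero
    exact hzero
  have hkey : (↑x * Complex.I) * (∫ t : ℝ, Cc t) = -((∫ t : ℝ, A t) + (∫ t : ℝ, B t)) := by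
    linear_combination hsplit
  calc x * ‖∫ t : ℝ, Cc t‖ = ‖(↑x * Complex.I) * (∫ t : ℝ, Cc t)‖ := by
        rw [norm_mul, norm_mul, Complex.norm_real, Complex.norm_I, mul_one,
          Real.norm_eq_abs, abs_of_pos hx]
    _ = ‖(∫ t : ℝ, A t) + (∫ t : ℝ, B t)‖ := by rw [hkey, norm_neg]
    _ ≤ ‖∫ t : ℝ, A t‖ + ‖∫ t : ℝ, B t‖ := norm_add_le _ _

lemma aux_ptwise {K : ℕ} {D lam : ℝ} (hD : 0 ≤ D) (hlam : 1 ≤ lam) {g : ℝ → ℂ}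
    (hdiff : ∀ j < K+1, Differentiable ℝ (iteratedDeriv j g))
    (hloc : LocallyIntegrable (iteratedDeriv (K+1) g))
    (hval : ∀ j < K+1, ‖iteratedDeriv j g 0‖ ≤ D) :
    ∀ m ≤ K, ∀ t ∈ Set.Icc (-lam) lam, ‖iteratedDeriv (K-m) g t‖ ≤
      lam^m * ((m+1)*D + ∫ s in Set.Ioc (-lam) lam, ‖iteratedDeriv (K+1) g s‖) := by
  have hlam0 : (0:ℝ) < lam := by linarith
  set I : ℝ := ∫ s in Set.Ioc (-lam) lam, ‖iteratedDeriv (K+1) g s‖ with hI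
  have hI0 : 0 ≤ I := setIntegral_nonneg measurableSet_Ioc (fun s _ => norm_nonneg _)
  have hIN : IntegrableOn (iteratedDeriv (K+1) g) (Set.Ioc (-lam) lam) :=
    (hloc.integrableOn_isCompact isCompact_Icc).mono_set Set.Ioc_subset_Icc_self
  have hsub : ∀ t ∈ Set.Icc (-lam) lam, Set.uIoc (0:ℝ) t ⊆ Set.Ioc (-lam) lam := by
    intro t ht
    rw [Set.uIoc]
    exact Set.Ioc_subset_Ioc (le_min (by linarith) ht.1) (max_le (by linarith) ht.2)
  intro m
  induction m with
  | zero =>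
    intro _ t ht
    have hftc : ∀ s : ℝ, HasDerivAt (iteratedDeriv K g) (iteratedDeriv (K+1) g s) s := by
      intro s
      rw [iteratedDeriv_succ]
      exact ((hdiff K (by omega)) s).hasDerivAt
    have hii : IntervalIntegrable (iteratedDeriv (K+1) g) volume 0 t := by
      rw [intervalIntegrable_iff]
      exact hIN.mono_set (hsub t ht)
    have hkey : iteratedDeriv K g t - iteratedDeriv K g 0
        = ∫ s in (0:ℝ)..t, iteratedDeriv (K+1) g s :=
      (intervalIntegral.integral_eq_sub_of_hasDerivAt (fun s _ => hftc s) hii).symm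
    have h2 : ‖∫ s in (0:ℝ)..t, iteratedDeriv (K+1) g s‖ ≤ I := by
      refine le_trans (intervalIntegral.norm_integral_le_integral_norm_uIoc) ?_
      exact setIntegral_mono_set hIN.norm
        (Filter.Eventually.of_forall (fun s => norm_nonneg _))
        ((hsub t ht).eventuallyLE)
    have h3 : ‖iteratedDeriv K g t‖ ≤ ‖iteratedDeriv K g 0‖ + I := by
      calc ‖iteratedDeriv K g t‖
          = ‖iteratedDeriv K g 0 + (iteratedDeriv K g t - iteratedDeriv K g 0)‖ := by ring_nf
        _ ≤ ‖iteratedDeriv K g 0‖ + ‖iteratedDeriv K g t - iteratedDeriv K g 0‖ := norm_add_le _ _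
        _ ≤ ‖iteratedDeriv K g 0‖ + I := by rw [hkey]; linarith [h2]
    simp only [Nat.sub_zero, pow_zero, Nat.cast_zero, one_mul, zero_add]
    have := hval K (by omega)
    linarith
  | succ m ih =>
    intro hm t ht
    have hmK : m ≤ K := by omega
    have hj1 : K - (m+1) + 1 = K - m := by omega
    have hcont : Continuous (iteratedDeriv (K-m) g) := (hdiff (K-m) (by omega)).continuous
    have hftc : ∀ s : ℝ, HasDerivAt (iteratedDeriv (K-(m+1)) g) (iteratedDeriv (K-m) g s) s := by
      intro s
      rw [← hj1, iteratedDeriv_succ]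
      exact ((hdiff (K-(m+1)) (by omega)) s).hasDerivAt
    have hkey : iteratedDeriv (K-(m+1)) g t - iteratedDeriv (K-(m+1)) g 0
        = ∫ s in (0:ℝ)..t, iteratedDeriv (K-m) g s :=
      (intervalIntegral.integral_eq_sub_of_hasDerivAt (fun s _ => hftc s)
        (hcont.intervalIntegrable _ _)).symm
    have h2 : ‖∫ s in (0:ℝ)..t, iteratedDeriv (K-m) g s‖ ≤ lam^m * ((m+1)*D + I) * |t - 0| := by
      apply intervalIntegral.norm_integral_le_of_norm_le_const
      intro s hs
      have hsIcc : s ∈ Set.Icc (-lam) lam := Set.Ioc_subset_Icc_self ((hsub t ht) hs)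
      exact ih hmK s hsIcc
    have htabs : |t - 0| ≤ lam := by
      rw [sub_zero, abs_le]
      exact ⟨ht.1, ht.2⟩
    have h4 : ‖iteratedDeriv (K-(m+1)) g t‖ ≤ D + lam^m * ((m+1)*D + I) * lam := by
      have h3 := norm_add_le (iteratedDeriv (K-(m+1)) g 0)
        (iteratedDeriv (K-(m+1)) g t - iteratedDeriv (K-(m+1)) g 0)
      simp only [add_sub_cancel] at h3
      have h5 : ‖iteratedDeriv (K-(m+1)) g t - iteratedDeriv (K-(m+1)) g 0‖
          ≤ lam^m * ((m+1)*D + I) * lam := by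
        rw [hkey]
        calc ‖∫ s in (0:ℝ)..t, iteratedDeriv (K-m) g s‖
            ≤ lam^m * ((m+1)*D + I) * |t - 0| := h2
          _ ≤ lam^m * ((m+1)*D + I) * lam := by
              apply mul_le_mul_of_nonneg_left htabs
              positivity
      calc ‖iteratedDeriv (K-(m+1)) g t‖
          ≤ ‖iteratedDeriv (K-(m+1)) g 0‖
            + ‖iteratedDeriv (K-(m+1)) g t - iteratedDeriv (K-(m+1)) g 0‖ := h3
        _ ≤ D + lam^m * ((m+1)*D + I) * lam := by
            have := hval (K-(m+1)) (by omega)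
            linarith
    have hpow : (1:ℝ) ≤ lam^(m+1) := one_le_pow₀ hlam
    calc ‖iteratedDeriv (K-(m+1)) g t‖ ≤ D + lam^m * ((m+1)*D + I) * lam := h4
      _ = D + lam^(m+1) * ((m+1)*D + I) := by ring
      _ ≤ lam^(m+1) * D + lam^(m+1) * ((m+1)*D + I) := by nlinarith
      _ = lam^(m+1) * ((↑(m+1)+1)*D + I) := by push_cast; ring

/-- The basic integration-by-parts estimate for the class `𝒯_DifI`:
`|∫ g(t) e^{ixt} φ̂(−t/λ) dt| ≤ C x^{-N} (1 + ∫_{-λ}^{λ} |g^{(N)}(t)| dt)`, where the constant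
depends only on `N`, `D` and the test function `φ̂`. -/
theorem stmt_17 (N : ℕ) (hN : 1 ≤ N) (D : ℝ) (hD : 0 < D)
    (ψ : ℝ → ℂ) (hψsm : ContDiff ℝ (⊤ : ℕ∞) ψ) (hψcs : HasCompactSupport ψ)
    (hψsupp : tsupport ψ ⊆ Set.Ioo (-1:ℝ) 1) :
    ∃ C : ℝ, 0 < C ∧ ∀ g : ℝ → ℂ,
      (∀ j < N, Differentiable ℝ (iteratedDeriv j g)) →
      LocallyIntegrable (iteratedDeriv N g) →
      (∀ j < N, ‖iteratedDeriv j g 0‖ ≤ D) →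
      ∀ x : ℝ, 0 < x → ∀ lam : ℝ, 1 ≤ lam →
        ‖∫ t : ℝ, g t * Complex.exp ((↑(x * t)) * Complex.I) * ψ (-t / lam)‖ ≤
          C * (1 + ∫ t in Set.Ioc (-lam) lam, ‖iteratedDeriv N g t‖) / x ^ N := by
  obtain ⟨K, rfl⟩ : ∃ K, N = K + 1 := ⟨N - 1, by omega⟩
  have hψsm' : ContDiff ℝ ((⊤:ℕ∞)) ψ := hψsm.of_le (by simp)
  have hD0 : (0:ℝ) ≤ D := hD.le
  -- a uniform bound on the derivatives of ψ up to order K+1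
  have hψk : ∀ k : ℕ, HasCompactSupport (iteratedDeriv k ψ) := by
    intro k
    induction k with
    | zero => simpa [iteratedDeriv_zero] using hψcs
    | succ k ih => rw [iteratedDeriv_succ]; exact ih.deriv
  have hbd : ∀ k : ℕ, ∃ Ck : ℝ, ∀ s, ‖iteratedDeriv k ψ s‖ ≤ Ck := fun k =>
    ((hψsm'.continuous_iteratedDeriv k (by exact_mod_cast le_top)).bounded_above_of_compact_support
      (hψk k))
  choose Cf hCf using hbd
  set M : ℝ := 1 + ∑ k ∈ Finset.range (K+2), max (Cf k) 0 with hM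
  have hM1 : 1 ≤ M := by
    rw [hM]
    have : (0:ℝ) ≤ ∑ k ∈ Finset.range (K+2), max (Cf k) 0 :=
      Finset.sum_nonneg (fun k _ => le_max_right _ _)
    linarith
  have hMb : ∀ k ≤ K+1, ∀ s : ℝ, ‖iteratedDeriv k ψ s‖ ≤ M := by
    intro k hk s
    have h2 : max (Cf k) 0 ≤ ∑ i ∈ Finset.range (K+2), max (Cf i) 0 :=
      Finset.single_le_sum (f := fun i => max (Cf i) 0) (fun i _ => le_max_right _ _)
        (Finset.mem_range.mpr (by omega))
    have := hCf k s
    have h1 : Cf k ≤ max (Cf k) 0 := le_max_left _ _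
    rw [hM]
    linarith
  refine ⟨2^(K+1) * M * (2*(K+1)*D + 3), by positivity, ?_⟩
  intro g hdiff hloc hval x hx lam hlam
  have hlam0 : (0:ℝ) < lam := by linarith
  set I : ℝ := ∫ t in Set.Ioc (-lam) lam, ‖iteratedDeriv (K+1) g t‖ with hI
  have hI0 : 0 ≤ I := setIntegral_nonneg measurableSet_Ioc (fun s _ => norm_nonneg _)
  have hIm : ∀ m ≤ K+1, IntegrableOn (iteratedDeriv m g) (Set.Ioc (-lam) lam) := by
    intro m hm
    rcases eq_or_lt_of_le hm with rfl | h
    · exact (hloc.integrableOn_isCompact isCompact_Icc).mono_set Set.Ioc_subset_Icc_self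
    · exact ((hdiff m (by omega)).continuous).integrableOn_Ioc
  set U : ℕ → ℝ := fun m => 2 * lam^(K+1-m) * ((K+1)*D + I) + I with hU
  have hUnn : ∀ m, 0 ≤ U m := by
    intro m
    show (0:ℝ) ≤ 2 * lam^(K+1-m) * (((K:ℝ)+1)*D + I) + I
    have h1 : (0:ℝ) ≤ lam^(K+1-m) := by positivity
    have h2 : (0:ℝ) ≤ ((K:ℝ)+1)*D := by positivity
    nlinarith
  have hUstep : ∀ m, m ≤ K → U m ≤ lam * U (m+1) := by
    intro m hm
    have he : K+1-m = (K+1-(m+1)) + 1 := by omega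
    rw [hU]
    simp only
    rw [he, pow_succ]
    nlinarith [hI0, pow_nonneg hlam0.le (K+1-(m+1)), hD0, (Nat.cast_nonneg K : (0:ℝ) ≤ (K:ℝ))]
  have hUb : ∀ m, m ≤ K+1 → (∫ t in Set.Ioc (-lam) lam, ‖iteratedDeriv m g t‖) ≤ U m := by
    intro m hm
    rcases eq_or_lt_of_le hm with rfl | h
    · rw [hU]
      simp only [Nat.sub_self, pow_zero]
      nlinarith [hI0, hD0, (Nat.cast_nonneg K : (0:ℝ) ≤ (K:ℝ))]
    · have hmK : m ≤ K := by omega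
      have hpt := aux_ptwise hD0 hlam hdiff hloc hval (K-m) (by omega)
      have hKm : K - (K-m) = m := by omega
      rw [hKm] at hpt
      have hcast : ((K-m : ℕ):ℝ) + 1 ≤ (K:ℝ)+1 := by
        have h1 : (K-m:ℕ) ≤ K := Nat.sub_le _ _
        have := Nat.cast_le (α := ℝ).mpr h1
        linarith
      have hle : ∀ t ∈ Set.Ioc (-lam) lam,
          ‖iteratedDeriv m g t‖ ≤ lam^(K-m) * (((K:ℝ)+1)*D + I) := by
        intro t ht
        refine le_trans (hpt t (Set.Ioc_subset_Icc_self ht)) ?_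
        have hpnn : (0:ℝ) ≤ lam^(K-m) := by positivity
        have : ((K-m:ℕ):ℝ)*D + 1*D + I ≤ ((K:ℝ)+1)*D + I := by nlinarith
        nlinarith
      have hconst : IntegrableOn (fun _ : ℝ => lam^(K-m) * (((K:ℝ)+1)*D + I))
          (Set.Ioc (-lam) lam) := (integrableOn_const_iff).mpr (Or.inr (by
        rw [Real.volume_Ioc]; exact ENNReal.ofReal_lt_top))
      have hmono := setIntegral_mono_on ((hIm m (by omega)).norm) hconst measurableSet_Ioc hle
      have hconstint : (∫ _ in Set.Ioc (-lam) lam, lam^(K-m) * (((K:ℝ)+1)*D + I))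
          = (2*lam) * (lam^(K-m) * (((K:ℝ)+1)*D + I)) := by
        rw [setIntegral_const, Real.volume_real_Ioc, smul_eq_mul,
          max_eq_left (by linarith : (0:ℝ) ≤ lam - (-lam))]
        ring
      have hpowe : lam^(K+1-m) = lam^(K-m) * lam := by
        rw [← pow_succ]
        congr 1
        omega
      rw [hU]
      simp only
      rw [hpowe]
      rw [hconstint] at hmono
      nlinarith [hI0]
  -- the main induction on the number of integrations by parts
  have key : ∀ n : ℕ, ∀ j : ℕ, j + n ≤ K+1 → ∀ θ : ℝ → ℂ, ContDiff ℝ ((⊤:ℕ∞)) θ →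
      tsupport θ ⊆ Set.Ioo (-1:ℝ) 1 → ∀ Mθ : ℝ, 0 ≤ Mθ →
      (∀ k, k ≤ n → ∀ s : ℝ, ‖iteratedDeriv k θ s‖ ≤ Mθ) →
      ‖∫ t : ℝ, iteratedDeriv j g t * θ (-t/lam) * Complex.exp (↑(x*t) * Complex.I)‖ ≤
        2^n * Mθ * U (j+n) / x^n := by
    intro n
    induction n with
    | zero =>
      intro j hj θ hθsm hθsupp Mθ hMθ0 hMθ
      have hfint := aux_integrable (x := x) hlam0 (hIm j (by omega)) hθsm.continuous hθsupp
      have h1 : ‖∫ t : ℝ, iteratedDeriv j g t * θ (-t/lam) * Complex.exp (↑(x*t) * Complex.I)‖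
          ≤ ∫ t : ℝ, ‖iteratedDeriv j g t * θ (-t/lam) * Complex.exp (↑(x*t) * Complex.I)‖ :=
        norm_integral_le_integral_norm _
      have h2 : (∫ t : ℝ, ‖iteratedDeriv j g t * θ (-t/lam) * Complex.exp (↑(x*t) * Complex.I)‖)
          = ∫ t in Set.Ioc (-lam) lam,
              ‖iteratedDeriv j g t * θ (-t/lam) * Complex.exp (↑(x*t) * Complex.I)‖ := by
        refine (setIntegral_eq_integral_of_forall_compl_eq_zero (fun t ht => ?_)).symm
        rw [aux_vanish hθsupp hlam0 ht]
        simp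
      have h3 : (∫ t in Set.Ioc (-lam) lam,
            ‖iteratedDeriv j g t * θ (-t/lam) * Complex.exp (↑(x*t) * Complex.I)‖)
          ≤ ∫ t in Set.Ioc (-lam) lam, Mθ * ‖iteratedDeriv j g t‖ := by
        refine setIntegral_mono_on hfint.norm.integrableOn
          (((hIm j (by omega)).norm).const_mul Mθ) measurableSet_Ioc (fun t _ => ?_)
        rw [norm_mul, norm_mul, Complex.norm_exp_ofReal_mul_I, mul_one]
        have hb := hMθ 0 (le_refl 0) (-t/lam)
        rw [iteratedDeriv_zero] at hb
        calc ‖iteratedDeriv j g t‖ * ‖θ (-t/lam)‖ ≤ ‖iteratedDeriv j g t‖ * Mθ :=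
              mul_le_mul_of_nonneg_left hb (norm_nonneg _)
          _ = Mθ * ‖iteratedDeriv j g t‖ := mul_comm _ _
      have h4 : (∫ t in Set.Ioc (-lam) lam, Mθ * ‖iteratedDeriv j g t‖)
          = Mθ * ∫ t in Set.Ioc (-lam) lam, ‖iteratedDeriv j g t‖ :=
        MeasureTheory.integral_const_mul _ _
      have h5 : Mθ * (∫ t in Set.Ioc (-lam) lam, ‖iteratedDeriv j g t‖) ≤ Mθ * U j :=
        mul_le_mul_of_nonneg_left (hUb j (by omega)) hMθ0
      simp only [pow_zero, one_mul, Nat.add_zero, div_one]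
      calc ‖∫ t : ℝ, iteratedDeriv j g t * θ (-t/lam) * Complex.exp (↑(x*t) * Complex.I)‖
          ≤ ∫ t : ℝ, ‖iteratedDeriv j g t * θ (-t/lam) * Complex.exp (↑(x*t) * Complex.I)‖ := h1
        _ = ∫ t in Set.Ioc (-lam) lam,
              ‖iteratedDeriv j g t * θ (-t/lam) * Complex.exp (↑(x*t) * Complex.I)‖ := h2
        _ ≤ ∫ t in Set.Ioc (-lam) lam, Mθ * ‖iteratedDeriv j g t‖ := h3
        _ = Mθ * ∫ t in Set.Ioc (-lam) lam, ‖iteratedDeriv j g t‖ := h4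
        _ ≤ Mθ * U j := h5
    | succ n ih =>
      intro j hj θ hθsm hθsupp Mθ hMθ0 hMθ
      have hxn : (0:ℝ) < x^n := pow_pos hx n
      have hu : ∀ t, HasDerivAt (iteratedDeriv j g) (iteratedDeriv (j+1) g t) t := by
        intro t
        rw [iteratedDeriv_succ]
        exact ((hdiff j (by omega)) t).hasDerivAt
      have hstep := aux_step hlam hx hu hθsm hθsupp (hIm (j+1) (by omega)) (hIm j (by omega))
      -- the A term
      have hA := ih (j+1) (by omega) θ hθsm hθsupp Mθ hMθ0 (fun k hk s => hMθ k (by omega) s)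
      have hje : j+1+n = j+n+1 := by omega
      rw [hje] at hA
      -- the B term
      have hθ'sm : ContDiff ℝ ((⊤:ℕ∞)) (deriv θ) := (contDiff_infty_iff_deriv.mp hθsm).2
      have hθ₂sm : ContDiff ℝ ((⊤:ℕ∞)) (fun s => (-1/lam : ℝ) • deriv θ s) :=
        hθ'sm.const_smul _
      have hθ₂supp : tsupport (fun s => (-1/lam : ℝ) • deriv θ s) ⊆ Set.Ioo (-1:ℝ) 1 :=
        aux_smul_supp hθsupp _
      have hMθ₂ : ∀ k, k ≤ n → ∀ s : ℝ,
          ‖iteratedDeriv k (fun s => (-1/lam : ℝ) • deriv θ s) s‖ ≤ Mθ/lam := by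
        intro k hk s
        have hit : iteratedDeriv k (fun s => (-1/lam : ℝ) • deriv θ s)
            = fun s => (-1/lam : ℝ) • iteratedDeriv k (deriv θ) s :=
          aux_itsmul hθ'sm k
        rw [hit]
        simp only
        rw [norm_smul, Real.norm_eq_abs, ← iteratedDeriv_succ']
        have habs : |(-1/lam : ℝ)| = 1/lam := by
          rw [abs_div, abs_neg, abs_one, abs_of_pos hlam0]
        rw [habs]
        have hb := hMθ (k+1) (by omega) s
        calc (1/lam) * ‖iteratedDeriv (k+1) θ s‖ ≤ (1/lam) * Mθ :=
              mul_le_mul_of_nonneg_left hb (by positivity)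
          _ = Mθ/lam := by ring
      have hB := ih j (by omega) (fun s => (-1/lam : ℝ) • deriv θ s) hθ₂sm hθ₂supp
        (Mθ/lam) (by positivity) hMθ₂
      -- upgrade the B bound
      have hBU : (Mθ/lam) * U (j+n) ≤ Mθ * U (j+n+1) := by
        have h1 := hUstep (j+n) (by omega)
        have h2 : (Mθ/lam) * U (j+n) ≤ (Mθ/lam) * (lam * U (j+n+1)) :=
          mul_le_mul_of_nonneg_left h1 (by positivity)
        have h3 : (Mθ/lam) * (lam * U (j+n+1)) = Mθ * U (j+n+1) := by
          field_simp
        linarith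
      have hB' : ‖∫ t : ℝ, iteratedDeriv j g t * ((-1/lam : ℝ) • deriv θ (-t/lam))
            * Complex.exp (↑(x*t) * Complex.I)‖
          ≤ 2^n * Mθ * U (j+n+1) / x^n := by
        refine le_trans hB ?_
        rw [div_le_div_iff₀ hxn hxn]
        have : 2^n * (Mθ/lam) * U (j+n) ≤ 2^n * Mθ * U (j+n+1) := by
          have h2n : (0:ℝ) ≤ 2^n := by positivity
          nlinarith [hBU]
        nlinarith [hxn.le, this]
      -- combine
      have hcomb : x * ‖∫ t : ℝ, iteratedDeriv j g t * θ (-t/lam)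
            * Complex.exp (↑(x*t) * Complex.I)‖
          ≤ 2^(n+1) * Mθ * U (j+(n+1)) / x^n := by
        have h1 : (2:ℝ)^n * Mθ * U (j+n+1) / x^n + 2^n * Mθ * U (j+n+1) / x^n
            = 2^(n+1) * Mθ * U (j+(n+1)) / x^n := by
          have : j+(n+1) = j+n+1 := by omega
          rw [this, pow_succ]
          ring
        calc x * ‖∫ t : ℝ, iteratedDeriv j g t * θ (-t/lam)
              * Complex.exp (↑(x*t) * Complex.I)‖
            ≤ ‖∫ t : ℝ, iteratedDeriv (j+1) g t * θ (-t/lam)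
                * Complex.exp (↑(x*t) * Complex.I)‖
              + ‖∫ t : ℝ, iteratedDeriv j g t * ((-1/lam : ℝ) • deriv θ (-t/lam))
                * Complex.exp (↑(x*t) * Complex.I)‖ := hstep
          _ ≤ 2^n * Mθ * U (j+n+1) / x^n + 2^n * Mθ * U (j+n+1) / x^n := by
              have hBB : ‖∫ t : ℝ, iteratedDeriv j g t * ((-1/lam : ℝ) • deriv θ (-t/lam))
                  * Complex.exp (↑(x*t) * Complex.I)‖ ≤ 2^n * Mθ * U (j+n+1) / x^n := hB'
              linarith
          _ = 2^(n+1) * Mθ * U (j+(n+1)) / x^n := h1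
      rw [show x^(n+1) = x^n * x from pow_succ x n, ← div_div, le_div_iff₀ hx]
      calc ‖∫ t : ℝ, iteratedDeriv j g t * θ (-t/lam) * Complex.exp (↑(x*t) * Complex.I)‖ * x
          = x * ‖∫ t : ℝ, iteratedDeriv j g t * θ (-t/lam)
              * Complex.exp (↑(x*t) * Complex.I)‖ := mul_comm _ _
        _ ≤ 2^(n+1) * Mθ * U (j+(n+1)) / x^n := hcomb
  -- apply the key estimate with n = K+1, j = 0, θ = ψ
  have hfin := key (K+1) 0 (by omega) ψ hψsm' hψsupp M (by linarith) (fun k hk s => hMb k hk s)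
  rw [iteratedDeriv_zero] at hfin
  have hshape : (∫ t : ℝ, g t * Complex.exp ((↑(x * t)) * Complex.I) * ψ (-t / lam))
      = ∫ t : ℝ, g t * ψ (-t/lam) * Complex.exp (↑(x*t) * Complex.I) := by
    congr 1
    funext t
    ring
  rw [hshape]
  have hUK : U (0 + (K+1)) ≤ (2*((K:ℝ)+1)*D + 3) * (1 + I) := by
    rw [hU]
    simp only [Nat.zero_add, Nat.sub_self, pow_zero]
    have hKD : (0:ℝ) ≤ 2*((K:ℝ)+1)*D := by positivity
    nlinarith [hI0, hD0, mul_nonneg hKD hI0]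
  refine le_trans hfin ?_
  rw [div_le_div_iff₀ (by positivity) (by positivity)]
  have hMpos : (0:ℝ) < M := by linarith
  have h2K : (0:ℝ) < 2^(K+1) := by positivity
  have hxK : (0:ℝ) < x^(K+1) := by positivity
  have hcast : ((K:ℝ)+1) = ((K+1 : ℕ):ℝ) := by push_cast; ring
  have hmain : 2^(K+1) * M * U (0+(K+1)) ≤ 2^(K+1) * M * ((2*((K:ℝ)+1)*D + 3) * (1 + I)) :=
    mul_le_mul_of_nonneg_left hUK (by positivity)
  calc 2^(K+1) * M * U (0+(K+1)) * x^(K+1)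
      ≤ (2^(K+1) * M * ((2*((K:ℝ)+1)*D + 3) * (1 + I))) * x^(K+1) :=
        mul_le_mul_of_nonneg_right hmain hxK.le
    _ = 2^(K+1) * M * (2*((K:ℝ)+1)*D + 3) * (1 + I) * x^(K+1) := by ring
end

section
/- Let (M_n)_{n≥0} be a sequence of positive numbers with M_0 = 1, logarithmically convex (M_n² ≤ M_{n−1}M_{n+1} for n ≥ 1) and subanalytic (there exist C₃, L > 0 with M_n ≥ C₃ L^n n^n for all n). Let p ∈ [1,∞] with conjugate exponent q, B, C₁, C, A > 0, λ ≥ 1, x > 0, and n ∈ ℕ. Let g : ℝ → ℂ be n times continuously differentiable and suppose there are locally integrable functions G_j : ℝ → (0,∞) (0 ≤ j ≤ n) with ‖g^{(j)}/G_j‖_{L^p(ℝ)} ≤ C₁ B^j M_j and ‖G_j·χ_{(-λ,λ)}‖_{L^q(ℝ)} ≤ G(λ)^j H(λ) for 0 ≤ j ≤ n, for some numbers G(λ), H(λ) > 0. Let ψ : ℝ → ℂ be an n times continuously differentiable function supported in [−1,1] with |ψ^{(j)}(t)| ≤ C A^j n^j for all t ∈ [−1,1] and all j ≤ n. Then there exists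 a constant C₂, depending only on C, C₁ and C₃, such that |∫_{-∞}^{∞} g(t) e^{ixt} ψ(−t/λ) dt| ≤ C₂ x^{-n} (B G(λ) + A/(Lλ))^n M_n H(λ). -/
/-!
The product `g(t) ψ(-t/λ)` is supported in `[-λ, λ]`; integrating by parts `n` times against
`e^{ixt}` gains `x^{-n}`. By Leibniz' rule the `n`-th derivative of the product is a binomial sum of
`g^{(j)} · λ^{j-n} ψ^{(n-j)}`; Hölder's inequality with the weights `G_j` bounds
`∫_{-λ}^{λ} |g^{(j)}|` by `C₁ B^j M_j G(λ)^j H(λ)`, and `|ψ^{(n-j)}| ≤ C A^{n-j} n^{n-j}`.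
The factor `n^{n-j} M_j` is absorbed into `M_n` through log-convexity (`M_j^n ≤ M_n^j`) and
subanalyticity (`(L n)^n ≤ M_n / C₃`), after which the binomial theorem sums the terms to
`(B G(λ) + A/(Lλ))^n`.
-/

open MeasureTheory
open scoped ENNReal
open Complex Finset Set FourierTransform

section Sequences

theorem natCast_mul_le_mul_of_monotone_sub {a : ℕ → ℝ} (ha0 : a 0 = 0)
    (hd : Monotone fun k => a (k + 1) - a k) {j n : ℕ} (hjn : j ≤ n) :
    (n : ℝ) * a j ≤ j * a n := by
  have hj : a j ≤ j * (a (j + 1) - a j) := by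
    have := Finset.sum_le_card_nsmul (range j) (fun k => a (k + 1) - a k) _
      fun k hk => hd (mem_range.mp hk).le
    rwa [Finset.sum_range_sub, ha0, sub_zero, card_range, nsmul_eq_mul] at this
  have hjn' : (n - j : ℝ) * (a (j + 1) - a j) ≤ a n - a j := by
    have := Finset.card_nsmul_le_sum (Ico j n) (fun k => a (k + 1) - a k) _
      fun k hk => hd (mem_Ico.mp hk).1
    rwa [Finset.sum_Ico_sub _ hjn, Nat.card_Ico, nsmul_eq_mul, Nat.cast_sub hjn] at this
  have hnj : (0 : ℝ) ≤ n - j := sub_nonneg.mpr (by exact_mod_cast hjn)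
  nlinarith [mul_le_mul_of_nonneg_left hj hnj, mul_le_mul_of_nonneg_left hjn' j.cast_nonneg]

theorem pow_le_pow_of_sq_le_mul {M : ℕ → ℝ} (hM : ∀ n, 0 < M n) (hM0 : M 0 = 1)
    (hlc : ∀ n : ℕ, 1 ≤ n → M n ^ 2 ≤ M (n - 1) * M (n + 1)) {j n : ℕ} (hjn : j ≤ n) :
    M j ^ n ≤ M n ^ j := by
  have hd : Monotone fun k => Real.log (M (k + 1)) - Real.log (M k) := by
    refine monotone_nat_of_le_succ fun k => ?_
    have h := Real.log_le_log (pow_pos (hM _) 2) (hlc (k + 1) le_add_self)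
    rw [Real.log_pow, Real.log_mul (hM _).ne' (hM _).ne', Nat.add_sub_cancel] at h
    push_cast at h
    linarith
  have h := natCast_mul_le_mul_of_monotone_sub (a := fun k => Real.log (M k)) (by simp [hM0])
    hd hjn
  rwa [← Real.log_pow, ← Real.log_pow,
    Real.log_le_log_iff (pow_pos (hM _) _) (pow_pos (hM _) _)] at h

theorem natCast_pow_mul_pow_mul_le {M : ℕ → ℝ} (hM : ∀ n, 0 < M n) (hM0 : M 0 = 1)
    (hlc : ∀ n : ℕ, 1 ≤ n → M n ^ 2 ≤ M (n - 1) * M (n + 1)) {C₃ L : ℝ} (hC₃ : 0 < C₃)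
    (hL : 0 ≤ L) (hsa : ∀ n : ℕ, C₃ * L ^ n * (n : ℝ) ^ n ≤ M n) {j n : ℕ} (hjn : j ≤ n) :
    (n : ℝ) ^ (n - j) * L ^ (n - j) * M j ≤ max 1 C₃⁻¹ * M n := by
  -- raise to the `n`-th power: `(n ^ n * L ^ n) ^ m ≤ (M n / C₃) ^ m` and `M j ^ n ≤ M n ^ j`
  rcases n.eq_zero_or_pos with rfl | hn
  · obtain rfl : j = 0 := by omega
    simp [hM0]
  set m := n - j
  set K := max 1 C₃⁻¹
  apply le_of_pow_le_pow_left₀ hn.ne' (mul_pos (by positivity) (hM n)).le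
  calc ((n : ℝ) ^ m * L ^ m * M j) ^ n
      = C₃⁻¹ ^ m * ((C₃ * L ^ n * (n : ℝ) ^ n) ^ m * M j ^ n) := by
        rw [inv_pow, eq_inv_mul_iff_mul_eq₀ (by positivity)]; ring
    _ ≤ C₃⁻¹ ^ m * (M n ^ m * M n ^ j) := by
        refine mul_le_mul_of_nonneg_left (mul_le_mul ?_ ?_ (pow_pos (hM j) n).le
          (pow_pos (hM n) m).le) (by positivity)
        · exact pow_le_pow_left₀ (by positivity) (hsa n) m
        · exact pow_le_pow_of_sq_le_mul hM hM0 hlc hjn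
    _ = C₃⁻¹ ^ m * M n ^ n := by rw [← pow_add, Nat.sub_add_cancel hjn]
    _ ≤ K ^ n * M n ^ n := by
        refine mul_le_mul_of_nonneg_right ?_ (pow_pos (hM n) n).le
        calc C₃⁻¹ ^ m ≤ K ^ m := pow_le_pow_left₀ (by positivity) (le_max_right _ _) m
          _ ≤ K ^ n := pow_le_pow_right₀ (le_max_left _ _) (Nat.sub_le n j)
    _ = (K * M n) ^ n := (mul_pow _ _ _).symm

theorem sum_choose_mul_le_mul_add_pow {M : ℕ → ℝ} {K L : ℝ} {n : ℕ} (hL : 0 < L)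
    (hM : ∀ j ≤ n, (n : ℝ) ^ (n - j) * L ^ (n - j) * M j ≤ K * M n) {a b : ℝ}
    (ha : 0 ≤ a) (hb : 0 ≤ b) :
    ∑ j ∈ range (n + 1), (n.choose j : ℝ) * (a ^ j * M j) * (b ^ (n - j) * (n : ℝ) ^ (n - j)) ≤
      K * (a + b / L) ^ n * M n := by
  rw [add_pow, Finset.mul_sum, Finset.sum_mul]
  refine Finset.sum_le_sum fun j hj => ?_
  have hjn : j ≤ n := Nat.lt_succ_iff.mp (mem_range.mp hj)
  calc (n.choose j : ℝ) * (a ^ j * M j) * (b ^ (n - j) * (n : ℝ) ^ (n - j))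
      = (n.choose j * a ^ j * (b / L) ^ (n - j)) * ((n : ℝ) ^ (n - j) * L ^ (n - j) * M j) := by
        rw [div_pow]; field_simp
    _ ≤ (n.choose j * a ^ j * (b / L) ^ (n - j)) * (K * M n) :=
        mul_le_mul_of_nonneg_left (hM j hjn) (by positivity)
    _ = K * (a ^ j * (b / L) ^ (n - j) * n.choose j) * M n := by ring

end Sequences

section Derivatives

theorem tsupport_comp_mul_subset_Icc {Z : Type*} [Zero Z] {f : ℝ → Z}
    (hf : tsupport f ⊆ Icc (-1) 1) {c : ℝ} (hc : c ≠ 0) :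
    tsupport (fun t => f (c * t)) ⊆ Icc (-|c|⁻¹) |c|⁻¹ := by
  refine closure_minimal (fun t ht => ?_) isClosed_Icc
  have h := hf (subset_tsupport _ ht)
  rw [Set.mem_Icc, ← abs_le, abs_mul] at h
  rw [Set.mem_Icc, ← abs_le]
  simpa using (le_inv_mul_iff₀ (abs_pos.mpr hc)).mpr h

variable {E : Type*} [NormedAddCommGroup E] [NormedSpace ℝ E]

theorem iteratedDeriv_eq_zero_of_notMem_tsupport {f : ℝ → E} (n : ℕ) {x : ℝ}
    (hx : x ∉ tsupport f) : iteratedDeriv n f x = 0 := by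
  rw [iteratedDeriv_eq_iteratedFDeriv,
    image_eq_zero_of_notMem_tsupport fun h => hx (tsupport_iteratedFDeriv_subset n h)]
  rfl

theorem HasCompactSupport.iteratedDeriv {f : ℝ → E} (hf : HasCompactSupport f) (n : ℕ) :
    HasCompactSupport (iteratedDeriv n f) :=
  hf.mono' fun _ hx => by_contra fun h => hx (iteratedDeriv_eq_zero_of_notMem_tsupport n h)

theorem norm_iteratedDeriv_comp_mul_le {f : ℝ → E} {k : ℕ} (hf : ContDiff ℝ k f) {s : Set ℝ}
    (hs : tsupport f ⊆ s) {β : ℝ} (hβ : 0 ≤ β) (hbound : ∀ t ∈ s, ‖iteratedDeriv k f t‖ ≤ β)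
    (c t : ℝ) : ‖iteratedDeriv k (fun t => f (c * t)) t‖ ≤ |c| ^ k * β := by
  rw [iteratedDeriv_comp_const_smul hf, norm_smul, norm_pow, Real.norm_eq_abs]
  gcongr
  by_cases hct : c * t ∈ tsupport f
  · exact hbound _ (hs hct)
  · rwa [iteratedDeriv_eq_zero_of_notMem_tsupport k hct, norm_zero]

theorem norm_iteratedDeriv_mul_le {𝕜 A : Type*} [NontriviallyNormedField 𝕜] [NormedRing A]
    [NormedAlgebra 𝕜 A] {f g : 𝕜 → A} {n : ℕ} (hf : ContDiff 𝕜 n f) (hg : ContDiff 𝕜 n g)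
    (x : 𝕜) :
    ‖iteratedDeriv n (fun t => f t * g t) x‖ ≤ ∑ j ∈ range (n + 1),
      (n.choose j : ℝ) * ‖iteratedDeriv j f x‖ * ‖iteratedDeriv (n - j) g x‖ := by
  simpa only [← norm_iteratedFDeriv_eq_norm_iteratedDeriv] using
    norm_iteratedFDeriv_mul_le hf hg x le_rfl

theorem integral_norm_iteratedDeriv_mul_le {f g : ℝ → ℂ} {n : ℕ} (hf : ContDiff ℝ n f)
    (hg : ContDiff ℝ n g) {a b : ℝ} (hgs : tsupport g ⊆ Icc a b) {α β : ℕ → ℝ}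
    (hα : ∀ j ≤ n, ∫ t in Ioo a b, ‖iteratedDeriv j f t‖ ≤ α j)
    (hβ : ∀ j ≤ n, ∀ t, ‖iteratedDeriv j g t‖ ≤ β j) :
    ∫ t, ‖iteratedDeriv n (fun t => f t * g t) t‖ ≤
      ∑ j ∈ range (n + 1), (n.choose j : ℝ) * α j * β (n - j) := by
  have hvanish : ∀ t ∉ Icc a b, ‖iteratedDeriv n (fun t => f t * g t) t‖ = 0 := fun t ht => by
    rw [iteratedDeriv_eq_zero_of_notMem_tsupport n
      fun h => ht (hgs (tsupport_mul_subset_right h)), norm_zero]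
  have hint : ∀ j ≤ n, IntegrableOn (fun t => ‖iteratedDeriv j f t‖) (Ioo a b) := fun j hj =>
    ((hf.continuous_iteratedDeriv j (by exact_mod_cast hj)).norm.integrableOn_Icc).mono_set
      Ioo_subset_Icc_self
  have hterm : ∀ j ∈ range (n + 1),
      IntegrableOn (fun t => (n.choose j : ℝ) * ‖iteratedDeriv j f t‖ * β (n - j)) (Ioo a b) :=
    fun j hj => ((hint j (Nat.lt_succ_iff.mp (mem_range.mp hj))).const_mul _).mul_const _
  calc ∫ t, ‖iteratedDeriv n (fun t => f t * g t) t‖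
      = ∫ t in Ioo a b, ‖iteratedDeriv n (fun t => f t * g t) t‖ := by
        rw [← integral_Icc_eq_integral_Ioo, setIntegral_eq_integral_of_forall_compl_eq_zero hvanish]
    _ ≤ ∫ t in Ioo a b,
          ∑ j ∈ range (n + 1), (n.choose j : ℝ) * ‖iteratedDeriv j f t‖ * β (n - j) := by
        refine setIntegral_mono_on ?_ (integrable_finsetSum _ hterm) measurableSet_Ioo
          fun t _ => (norm_iteratedDeriv_mul_le hf hg t).trans (sum_le_sum fun j hj => ?_)
        · exact ((hf.mul hg).continuous_iteratedDeriv n le_rfl).norm.integrableOn_Icc.mono_set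
            Ioo_subset_Icc_self
        · gcongr
          exact hβ _ (Nat.sub_le n j) t
    _ = ∑ j ∈ range (n + 1),
          (n.choose j : ℝ) * (∫ t in Ioo a b, ‖iteratedDeriv j f t‖) * β (n - j) := by
        rw [integral_finsetSum _ hterm]
        simp only [integral_mul_const, integral_const_mul]
    _ ≤ ∑ j ∈ range (n + 1), (n.choose j : ℝ) * α j * β (n - j) := by
        refine sum_le_sum fun j hj => ?_
        have hβj : 0 ≤ β (n - j) := (norm_nonneg _).trans (hβ _ (Nat.sub_le n j) a)
        gcongr
        exact hα j (Nat.lt_succ_iff.mp (mem_range.mp hj))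

theorem abs_pow_mul_norm_integral_mul_exp_le {F : ℝ → ℂ} {n : ℕ} (hF : ContDiff ℝ n F)
    (hFs : HasCompactSupport F) (x : ℝ) :
    |x| ^ n * ‖∫ t, F t * cexp (↑(x * t) * I)‖ ≤ ∫ t, ‖iteratedDeriv n F t‖ := by
  -- the integral is the Fourier transform at `w`, where `𝓕 (F⁽ⁿ⁾) w = (2πiw)ⁿ 𝓕 F w`
  set w := -x / (2 * Real.pi)
  have hfourier : ∀ G : ℝ → ℂ, ∫ t, G t * cexp (↑(x * t) * I) = 𝓕 G w := by
    intro G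
    rw [Real.fourier_real_eq_integral_exp_smul]
    congr 1 with t
    rw [smul_eq_mul, mul_comm]
    congr 4
    simp only [w]
    field_simp
  have hint : ∀ k : ℕ, (k : ℕ∞) ≤ n → Integrable (iteratedDeriv k F) := fun k hk =>
    (hF.continuous_iteratedDeriv k (by exact_mod_cast hk)).integrable_of_hasCompactSupport
      (hFs.iteratedDeriv k)
  have hderiv := congrFun (Real.fourier_iteratedDeriv (N := n) hF hint le_rfl) w
  have hnorm : ‖2 * (Real.pi : ℂ) * I * w‖ = |x| := by
    simp [w, abs_of_pos Real.pi_pos]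
    field_simp
  calc |x| ^ n * ‖∫ t, F t * cexp (↑(x * t) * I)‖
      = ‖∫ t, iteratedDeriv n F t * cexp (↑(x * t) * I)‖ := by
        rw [hfourier, hfourier, hderiv, norm_smul, norm_pow, hnorm]
    _ ≤ ∫ t, ‖iteratedDeriv n F t‖ := by
        refine (norm_integral_le_integral_norm _).trans_eq ?_
        simp_rw [norm_mul, Complex.norm_exp_ofReal_mul_I, mul_one]

end Derivatives

section Holder

variable {α : Type*} [MeasurableSpace α] {μ : Measure α}

theorem eLpNorm_one_le_eLpNorm_div_mul {p q : ℝ≥0∞} [p.HolderConjugate q] {f : α → ℂ}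
    {G : α → ℝ} (hG0 : ∀ t, G t ≠ 0) (hf : AEStronglyMeasurable f μ)
    (hG : AEStronglyMeasurable G μ) :
    eLpNorm f 1 μ ≤ eLpNorm (fun t => f t / G t) p μ * eLpNorm G q μ := by
  have hfG : AEStronglyMeasurable (fun t => f t / G t) μ :=
    (hf.aemeasurable.div (Complex.measurable_ofReal.comp_aemeasurable
      hG.aemeasurable)).aestronglyMeasurable
  have hprod : G • (fun t => f t / G t) = f := by
    ext t
    simp [Complex.real_smul, mul_div_cancel₀ _ (Complex.ofReal_ne_zero.mpr (hG0 t))]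
  calc eLpNorm f 1 μ = eLpNorm (G • fun t => f t / G t) 1 μ := by rw [hprod]
    _ ≤ eLpNorm G q μ * eLpNorm (fun t => f t / G t) p μ := eLpNorm_smul_le_mul_eLpNorm hfG hG
    _ = _ := mul_comm _ _

theorem setIntegral_norm_le_of_eLpNorm_div_le {p q : ℝ≥0∞} [p.HolderConjugate q]
    {f : α → ℂ} {G : α → ℝ} {s : Set α} (hs : MeasurableSet s) (hG0 : ∀ t, G t ≠ 0)
    (hf : AEStronglyMeasurable f μ) (hG : AEStronglyMeasurable G μ) {a b : ℝ} (ha : 0 ≤ a)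
    (hb : 0 ≤ b) (hfa : eLpNorm (fun t => f t / G t) p μ ≤ ENNReal.ofReal a)
    (hGb : eLpNorm (s.indicator G) q μ ≤ ENNReal.ofReal b) :
    ∫ t in s, ‖f t‖ ∂μ ≤ a * b := by
  rw [integral_norm_eq_lintegral_enorm hf.restrict, ← eLpNorm_one_eq_lintegral_enorm]
  refine ENNReal.toReal_le_of_le_ofReal (mul_nonneg ha hb) ?_
  calc eLpNorm f 1 (μ.restrict s)
      ≤ eLpNorm (fun t => f t / G t) p (μ.restrict s) * eLpNorm G q (μ.restrict s) :=
        eLpNorm_one_le_eLpNorm_div_mul hG0 hf.restrict hG.restrict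
    _ ≤ ENNReal.ofReal a * ENNReal.ofReal b :=
        mul_le_mul' ((eLpNorm_mono_measure _ Measure.restrict_le_self).trans hfa)
          (by rwa [← eLpNorm_indicator_eq_eLpNorm_restrict hs])
    _ = ENNReal.ofReal (a * b) := (ENNReal.ofReal_mul ha).symm

end Holder

theorem stmt_18_general (Mseq : ℕ → ℝ) (hMpos : ∀ n, 0 < Mseq n) (hM0 : Mseq 0 = 1)
    (hMlc : ∀ n : ℕ, 1 ≤ n → Mseq n ^ 2 ≤ Mseq (n - 1) * Mseq (n + 1))
    (C₃ L : ℝ) (hC₃ : 0 < C₃) (hL : 0 < L)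
    (hMsa : ∀ n : ℕ, C₃ * L ^ n * (n : ℝ) ^ n ≤ Mseq n)
    (p q : ℝ≥0∞) (hpq : p⁻¹ + q⁻¹ = 1)
    (C₁ C : ℝ) (hC₁ : 0 < C₁) (hC : 0 < C) :
    ∃ C₂ : ℝ, 0 < C₂ ∧
      ∀ (B A lam x : ℝ) (n : ℕ) (g : ℝ → ℂ) (Gs : ℕ → ℝ → ℝ) (ψ : ℝ → ℂ) (Gval Hval : ℝ),
        0 < B → 0 < A → 1 ≤ lam → 0 < x → 0 < Gval → 0 < Hval →
        ContDiff ℝ n g →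
        (∀ j ≤ n, (∀ t, 0 < Gs j t) ∧ LocallyIntegrable (Gs j) ∧
          eLpNorm (fun t => iteratedDeriv j g t / (Gs j t : ℂ)) p volume ≤
            ENNReal.ofReal (C₁ * B ^ j * Mseq j) ∧
          eLpNorm (Set.indicator (Set.Ioo (-lam) lam) (Gs j)) q volume ≤
            ENNReal.ofReal (Gval ^ j * Hval)) →
        ContDiff ℝ n ψ → tsupport ψ ⊆ Set.Icc (-1:ℝ) 1 →
        (∀ j ≤ n, ∀ t ∈ Set.Icc (-1:ℝ) 1, ‖iteratedDeriv j ψ t‖ ≤ C * A ^ j * (n : ℝ) ^ j) →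
        ‖∫ t : ℝ, g t * Complex.exp ((↑(x * t)) * Complex.I) * ψ (-t / lam)‖ ≤
          C₂ * (B * Gval + A / (L * lam)) ^ n * Mseq n * Hval / x ^ n := by
  refine ⟨C * C₁ * max 1 C₃⁻¹, by positivity, ?_⟩
  intro B A lam x n g Gs ψ Gval Hval hB hA hlam hx hGval hHval hg hGs hψ hψsupp hψbound
  have : p.HolderConjugate q := ⟨by rw [hpq, inv_one]⟩
  have hlam0 : 0 < lam := one_pos.trans_le hlam
  set ψl : ℝ → ℂ := fun t => ψ (-lam⁻¹ * t)
  have hψl : ContDiff ℝ n ψl := hψ.comp (contDiff_const.mul contDiff_id)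
  have hψl_supp : tsupport ψl ⊆ Icc (-lam) lam := by
    have h := tsupport_comp_mul_subset_Icc hψsupp (neg_ne_zero.mpr (inv_ne_zero hlam0.ne'))
    rwa [abs_neg, abs_inv, inv_inv, abs_of_pos hlam0] at h
  have hψl_bound : ∀ k ≤ n, ∀ t, ‖iteratedDeriv k ψl t‖ ≤ C * (A / lam) ^ k * (n : ℝ) ^ k := by
    intro k hk t
    refine (norm_iteratedDeriv_comp_mul_le (hψ.of_le (by exact_mod_cast hk)) hψsupp
      (by positivity) (hψbound k hk) (-lam⁻¹) t).trans_eq ?_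
    rw [abs_neg, abs_inv, abs_of_pos hlam0, div_pow, inv_pow]
    ring
  have hg_bound : ∀ j ≤ n, ∫ t in Ioo (-lam) lam, ‖iteratedDeriv j g t‖ ≤
      C₁ * B ^ j * Mseq j * (Gval ^ j * Hval) := by
    intro j hj
    obtain ⟨hGpos, hGloc, hgG, hGH⟩ := hGs j hj
    exact setIntegral_norm_le_of_eLpNorm_div_le measurableSet_Ioo (fun t => (hGpos t).ne')
      (hg.continuous_iteratedDeriv j (by exact_mod_cast hj)).aestronglyMeasurable
      hGloc.aestronglyMeasurable (by have := hMpos j; positivity) (by positivity) hgG hGH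
  have hcompact : HasCompactSupport ψl :=
    isCompact_Icc.of_isClosed_subset (isClosed_tsupport _) hψl_supp
  have hdecay := abs_pow_mul_norm_integral_mul_exp_le (hg.mul hψl) hcompact.mul_left x
  have hleibniz := integral_norm_iteratedDeriv_mul_le hg hψl hψl_supp hg_bound hψl_bound
  have hsum := sum_choose_mul_le_mul_add_pow (n := n) hL
    (fun j hj => natCast_pow_mul_pow_mul_le hMpos hM0 hMlc hC₃ hL.le hMsa hj)
    (by positivity : 0 ≤ B * Gval) (by positivity : 0 ≤ A / lam)
  have hψ_eq : ∀ t, ψ (-t / lam) = ψl t := fun t => by simp only [ψl]; ring_nf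
  simp_rw [hψ_eq, mul_right_comm _ _ (ψl _)]
  rw [abs_of_pos hx] at hdecay
  rw [le_div_iff₀ (by positivity), mul_comm]
  calc x ^ n * ‖∫ t, g t * ψl t * cexp (↑(x * t) * I)‖
      ≤ ∑ j ∈ range (n + 1), (n.choose j : ℝ) * (C₁ * B ^ j * Mseq j * (Gval ^ j * Hval)) *
          (C * (A / lam) ^ (n - j) * (n : ℝ) ^ (n - j)) := hdecay.trans hleibniz
    _ = C * C₁ * Hval * ∑ j ∈ range (n + 1), (n.choose j : ℝ) * ((B * Gval) ^ j * Mseq j) *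
          ((A / lam) ^ (n - j) * (n : ℝ) ^ (n - j)) := by
        rw [mul_sum]
        refine sum_congr rfl fun j _ => ?_
        ring
    _ ≤ C * C₁ * Hval * (max 1 C₃⁻¹ * (B * Gval + A / lam / L) ^ n * Mseq n) :=
        mul_le_mul_of_nonneg_left hsum (by positivity)
    _ = C * C₁ * max 1 C₃⁻¹ * (B * Gval + A / (L * lam)) ^ n * Mseq n * Hval := by
        rw [div_div, mul_comm lam L]
        ring

/-- The key estimate for the class `𝒯_SA` (section 4.4): for `g` with ultradifferentiable-type
`L^p` bounds on its derivatives and a test function `ψ` supported in `[-1,1]` with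
`|ψ^{(j)}| ≤ C A^j n^j` for `j ≤ n`, one has
`|∫ g(t) e^{ixt} ψ(−t/λ) dt| ≤ C₂ x^{-n} (B G(λ) + A/(Lλ))^n M_n H(λ)`. -/
theorem stmt_18 (Mseq : ℕ → ℝ) (hMpos : ∀ n, 0 < Mseq n) (hM0 : Mseq 0 = 1)
    (hMlc : ∀ n : ℕ, 1 ≤ n → Mseq n ^ 2 ≤ Mseq (n - 1) * Mseq (n + 1))
    (C₃ L : ℝ) (hC₃ : 0 < C₃) (hL : 0 < L)
    (hMsa : ∀ n : ℕ, C₃ * L ^ n * (n : ℝ) ^ n ≤ Mseq n)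
    (p q : ℝ≥0∞) (hp : 1 ≤ p) (hq : 1 ≤ q) (hpq : p⁻¹ + q⁻¹ = 1)
    (C₁ C : ℝ) (hC₁ : 0 < C₁) (hC : 0 < C) :
    ∃ C₂ : ℝ, 0 < C₂ ∧
      ∀ (B A lam x : ℝ) (n : ℕ) (g : ℝ → ℂ) (Gs : ℕ → ℝ → ℝ) (ψ : ℝ → ℂ) (Gval Hval : ℝ),
        0 < B → 0 < A → 1 ≤ lam → 0 < x → 0 < Gval → 0 < Hval →
        ContDiff ℝ n g →
        (∀ j ≤ n, (∀ t, 0 < Gs j t) ∧ LocallyIntegrable (Gs j) ∧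
          eLpNorm (fun t => iteratedDeriv j g t / (Gs j t : ℂ)) p volume ≤
            ENNReal.ofReal (C₁ * B ^ j * Mseq j) ∧
          eLpNorm (Set.indicator (Set.Ioo (-lam) lam) (Gs j)) q volume ≤
            ENNReal.ofReal (Gval ^ j * Hval)) →
        ContDiff ℝ n ψ → tsupport ψ ⊆ Set.Icc (-1:ℝ) 1 →
        (∀ j ≤ n, ∀ t ∈ Set.Icc (-1:ℝ) 1, ‖iteratedDeriv j ψ t‖ ≤ C * A ^ j * (n : ℝ) ^ j) →
        ‖∫ t : ℝ, g t * Complex.exp ((↑(x * t)) * Complex.I) * ψ (-t / lam)‖ ≤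
          C₂ * (B * Gval + A / (L * lam)) ^ n * Mseq n * Hval / x ^ n :=
  stmt_18_general Mseq hMpos hM0 hMlc C₃ L hC₃ hL hMsa p q hpq C₁ C hC₁ hC
end
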